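/- arXiv:1311.7238 — 8 statements merged into one kernel-verified Lean document; each statement's English description precedes it below -/
import Mathlib

section
/- Let T be a tree with vertex set V = {1,2,…,N} (N ≥ 1). For every real number t, the determinant of the N×N matrix A(t) = (t^{d_{ij}})_{i,j∈V} equals (1 − t²)^{N−1}. -/
/-!
If `v` is a leaf of the tree with neighbour `u`, then `d(v, j) = d(u, j) + 1` for every `j ≠ v`,
so subtracting `t` times row `u` from row `v` of `A(t)` leaves `1 - t²` in position `(v, v)` and
zeros elsewhere in that row. Expanding along it, `det A(t) = (1 - t²) · det A'(t)`, where `A'(t)` is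
the matrix of the tree `T - v`: a shortest path between two vertices other than `v` never passes
through the leaf `v`, so `T - v` has the same distances as `T`.
-/

namespace Matrix

variable {n R : Type*} [Fintype n] [DecidableEq n] [CommRing R]

theorem det_eq_mul_det_submatrix_compl_of_row_eq_smul {M : Matrix n n R} {u v : n} (huv : u ≠ v)
    (c : R) (hM : ∀ j ≠ v, M v j = c * M u j) :
    M.det = (M v v - c * M u v) *
      (M.submatrix (Subtype.val : ({v}ᶜ : Set n) → n) Subtype.val).det := by
  rw [← det_updateRow_add_smul_self M huv.symm (-c)]
  set B := M.updateRow v (M v + (-c) • M u)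
  have hBvv : B v v = M v v - c * M u v := by simp [B, sub_eq_add_neg]
  have hBv : ∀ j ≠ v, B v j = 0 := fun j hj => by simp [B, hM j hj]
  have hB : ∀ i ≠ v, B i = M i := fun i hi => updateRow_ne hi
  clear_value B
  rw [twoBlockTriangular_det' B (· = v) fun i hi j hj => hi ▸ hBv j hj]
  congr 1
  · rw [← hBvv]
    convert det_eq_elem_of_subsingleton (B.toSquareBlockProp (· = v)) ⟨v, rfl⟩
    rfl
  · congr 1
    ext i j
    exact congr_fun (hB i i.2) j

end Matrix

namespace SimpleGraph

variable {V : Type*} {G : SimpleGraph V}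

theorem Connected.dist_eq_dist_add_one_of_subsingleton_neighborSet (hG : G.Connected) {u v w : V}
    (hv : (G.neighborSet v).Subsingleton) (hvu : G.Adj v u) (hw : w ≠ v) :
    G.dist v w = G.dist u w + 1 := by
  refine le_antisymm ?_ ?_
  · simpa [dist_eq_one_iff_adj.mpr hvu, add_comm] using hG.dist_triangle (u := v) (v := u) (w := w)
  · obtain ⟨p, hp⟩ := hG.exists_walk_length_eq_dist v w
    have hnil : ¬p.Nil := Walk.not_nil_of_ne hw.symm
    have hsnd : p.snd = u := hv (p.adj_snd hnil) hvu
    rw [← hp, ← p.length_tail_add_one hnil, ← hsnd]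
    exact Nat.add_le_add_right (dist_le p.tail) 1

theorem Connected.dist_induce_of_subsingleton_neighborSet (hG : G.Connected) {s : Set V}
    (hs : ∀ v ∉ s, (G.neighborSet v).Subsingleton) (a b : s) :
    (G.induce s).dist a b = G.dist a b := by
  refine le_antisymm ?_ ?_
  · obtain ⟨p, hp, hlen⟩ := hG.exists_path_of_dist a b
    have hps : ∀ x ∈ p.support, x ∈ s := fun x hx => by
      by_contra hxs
      exact hp.isTrail.not_mem_support_of_subsingleton_neighborSet
        (by rintro rfl; exact hxs a.2) (by rintro rfl; exact hxs b.2) (hs x hxs) hx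
    calc (G.induce s).dist a b ≤ (p.induce s hps).length := dist_le _
      _ = p.length := (Walk.length_map _ _).symm.trans (congrArg Walk.length (p.map_induce hps))
      _ = G.dist a b := hlen
  · obtain ⟨q, hq⟩ := (hG.preconnected.induce_of_degree_eq_one hs a b).exists_walk_length_eq_dist
    rw [← hq, ← Walk.length_map (Embedding.induce s).toHom]
    exact dist_le _

theorem IsTree.induce_compl_singleton_of_degree_eq_one (hG : G.IsTree) {v : V}
    [Fintype (G.neighborSet v)] (hv : G.degree v = 1) : (G.induce {v}ᶜ).IsTree :=
  ⟨hG.connected.induce_compl_singleton_of_degree_eq_one hv, hG.isAcyclic.induce _⟩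

variable {R : Type*} [CommRing R] [Fintype V] [DecidableEq V]

theorem IsTree.det_pow_dist_eq_mul_det_induce_compl (hG : G.IsTree) {v : V}
    [Fintype (G.neighborSet v)] (hv : G.degree v = 1) (t : R) :
    (Matrix.of fun i j : V => t ^ G.dist i j).det =
      (1 - t ^ 2) * (Matrix.of fun i j : ({v}ᶜ : Set V) => t ^ (G.induce {v}ᶜ).dist i j).det := by
  obtain ⟨u, hvu, hu⟩ := degree_eq_one_iff_existsUnique_adj.mp hv
  have hleaf : (G.neighborSet v).Subsingleton := fun x hx y hy => (hu x hx).trans (hu y hy).symm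
  have hrow : ∀ j ≠ v, t ^ G.dist v j = t * t ^ G.dist u j := fun j hj => by
    rw [hG.connected.dist_eq_dist_add_one_of_subsingleton_neighborSet hleaf hvu hj, pow_succ']
  have hminor : (Matrix.of fun i j : V => t ^ G.dist i j).submatrix
      (Subtype.val : ({v}ᶜ : Set V) → V) Subtype.val =
      Matrix.of fun i j => t ^ (G.induce {v}ᶜ).dist i j := by
    ext i j
    rw [Matrix.submatrix_apply, Matrix.of_apply, Matrix.of_apply,
      hG.connected.dist_induce_of_subsingleton_neighborSet (s := {v}ᶜ)
        fun x hx => by rwa [Set.notMem_compl_iff.mp hx]]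
  rw [Matrix.det_eq_mul_det_submatrix_compl_of_row_eq_smul hvu.ne.symm t hrow, hminor]
  simp [dist_eq_one_iff_adj.mpr hvu.symm, sq]

theorem IsTree.det_pow_dist (hG : G.IsTree) (t : R) :
    (Matrix.of fun i j : V => t ^ G.dist i j).det = (1 - t ^ 2) ^ (Fintype.card V - 1) := by
  induction hcard : Fintype.card V using Nat.strong_induction_on generalizing V with
  | _ n ih =>
  subst hcard
  obtain ⟨a⟩ := hG.connected.nonempty
  rcases subsingleton_or_nontrivial V with hV | hV
  · rw [Matrix.det_eq_elem_of_subsingleton _ a,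
      Fintype.card_eq_one_iff.mpr ⟨a, (Subsingleton.elim · a)⟩]
    simp
  · classical
    obtain ⟨v, hv⟩ := hG.exists_vert_degree_one_of_nontrivial
    obtain ⟨k, hk⟩ : ∃ k, Fintype.card V = k + 2 :=
      ⟨_, (Nat.sub_add_cancel Fintype.one_lt_card).symm⟩
    have hcard : Fintype.card ({v}ᶜ : Set V) = k + 1 := by
      rw [Fintype.card_compl_set, hk]
      simp
    rw [hG.det_pow_dist_eq_mul_det_induce_compl hv,
      ih _ (by omega) (hG.induce_compl_singleton_of_degree_eq_one hv) hcard, hk]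
    simp [pow_succ']

end SimpleGraph

theorem yan_yeh_det_general (N : ℕ) (T : SimpleGraph (Fin N)) (hT : T.IsTree) (t : ℝ) :
    (Matrix.of fun i j : Fin N => t ^ T.dist i j).det = (1 - t ^ 2) ^ (N - 1) := by
  simpa using hT.det_pow_dist t

/-- **Yan–Yeh.** For a tree `T` on vertex set `{1,…,N}` (`N ≥ 1`) with graph
distance `d i j`, the determinant of the matrix `(t ^ d i j)` equals
`(1 - t²) ^ (N - 1)`. -/
theorem yan_yeh_det (N : ℕ) (hN : 1 ≤ N) (T : SimpleGraph (Fin N)) (hT : T.IsTree) (t : ℝ) :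
    (Matrix.of fun i j : Fin N => t ^ T.dist i j).det = (1 - t ^ 2) ^ (N - 1) :=
  yan_yeh_det_general N T hT t
end

section
/- Let T be a tree with vertex set V = {1,2,…,N} and let X ⊆ V be nonempty. There exists a real number t₀ such that for every real t > t₀, the real symmetric matrix A(t)[X] has exactly one positive eigenvalue and exactly |X| − 1 negative eigenvalues (counted with multiplicity); in particular A(t)[X] is nonsingular. -/
open scoped Classical

/-!
Root the tree at a vertex `r ∈ X` and let `P` be the matrix sending each vertex `i ≠ r` to its
parent. For `M = (t ^ d i j)` and `L = 1 - t • P` one has `L M Lᵀ = diag (1, 1 - t², …, 1 - t²)`,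
the diagonal entry `1` sitting at `r`. Since row `r` of `L M` is row `r` of `M`, for `|t| > 1`
the quadratic form of `M` is negative definite on the hyperplane `(M x) r = 0`. Restricting to
vectors supported on `X`, the form of `A(t)[X]` is negative definite on a hyperplane of `ℝ^X`
and positive at the basis vector of `r`; so `A(t)[X]` has `|X| - 1` negative eigenvalues, one
positive eigenvalue, and no zero eigenvalue.
-/

namespace Matrix

section QuadraticForm

variable {R n : Type*} [CommSemiring R] [Fintype n]

theorem dotProduct_mul_mul_transpose_mulVec (B M : Matrix n n R) (z : n → R) :
    z ⬝ᵥ (B * M * Bᵀ) *ᵥ z = (Bᵀ *ᵥ z) ⬝ᵥ M *ᵥ (Bᵀ *ᵥ z) := by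
  rw [← mulVec_mulVec, ← mulVec_mulVec, dotProduct_mulVec, mulVec_transpose]

variable [DecidableEq n]

theorem dotProduct_diagonal_mulVec_self (d z : n → R) :
    z ⬝ᵥ diagonal d *ᵥ z = ∑ i, d i * z i ^ 2 := by
  simp only [dotProduct, mulVec_diagonal]
  exact Finset.sum_congr rfl fun i _ => by ring

/-- With `x = Lᵀ z` the form becomes `∑ i, d i * z i ^ 2`, and the hypothesis on `x` says
`z r = 0`. -/
theorem dotProduct_mulVec_neg_of_mul_mul_transpose_eq_diagonal {L M : Matrix n n ℝ}
    {d : n → ℝ} {r : n} (hLML : L * M * Lᵀ = diagonal d) (hdr : d r ≠ 0)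
    (hd : ∀ i, i ≠ r → d i < 0) {x : n → ℝ} (hx : x ≠ 0) (hxr : ((L * M) *ᵥ x) r = 0) :
    x ⬝ᵥ M *ᵥ x < 0 := by
  have hdet : IsUnit Lᵀ.det := by
    have hprod := congrArg det hLML
    rw [det_mul, det_mul, det_transpose, det_diagonal] at hprod
    refine (det_transpose L).symm ▸ isUnit_iff_ne_zero.mpr fun h0 => ?_
    rw [h0, zero_mul, zero_mul, eq_comm, Finset.prod_eq_zero_iff] at hprod
    obtain ⟨i, -, hi⟩ := hprod
    by_cases hir : i = r
    · exact hdr (hir ▸ hi)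
    · exact (hd i hir).ne hi
  set z := Lᵀ⁻¹ *ᵥ x
  have hxz : x = Lᵀ *ᵥ z := by
    rw [mulVec_mulVec, mul_nonsing_inv _ hdet, one_mulVec]
  have hz : z ≠ 0 := fun h => hx (by rw [hxz, h, mulVec_zero])
  have hzr : z r = 0 := by
    rw [hxz, mulVec_mulVec, hLML, mulVec_diagonal] at hxr
    exact (mul_eq_zero.mp hxr).resolve_left hdr
  obtain ⟨i₀, hi₀⟩ := Function.ne_iff.mp hz
  have hi₀r : i₀ ≠ r := fun h => hi₀ (h ▸ hzr)
  rw [hxz, ← dotProduct_mul_mul_transpose_mulVec, hLML, dotProduct_diagonal_mulVec_self]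
  refine Finset.sum_neg' (fun i _ => ?_) ⟨i₀, Finset.mem_univ _, ?_⟩
  · by_cases hir : i = r
    · simp [hir, hzr]
    · exact mul_nonpos_of_nonpos_of_nonneg (hd i hir).le (sq_nonneg _)
  · exact mul_neg_of_neg_of_pos (hd i₀ hi₀r) (sq_pos_of_ne_zero hi₀)

end QuadraticForm

section Submatrix

variable {R m n : Type*} [CommSemiring R] [Fintype m] [Fintype n] {e : m → n}

theorem dotProduct_extend_zero (he : Function.Injective e) (w : n → R) (v : m → R) :
    w ⬝ᵥ Function.extend e v 0 = (w ∘ e) ⬝ᵥ v :=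
  (Fintype.sum_of_injective e he _ _
    (fun i hi => by rw [Function.extend_apply' _ _ _ hi, Pi.zero_apply, mul_zero])
    (fun a => by rw [he.extend_apply]; rfl)).symm

theorem submatrix_mulVec_eq_comp (he : Function.Injective e) (M : Matrix n n R) (v : m → R) :
    M.submatrix e e *ᵥ v = (M *ᵥ Function.extend e v 0) ∘ e := by
  funext a
  simp only [Function.comp_apply, mulVec, dotProduct_extend_zero he]
  rfl

theorem dotProduct_submatrix_mulVec (he : Function.Injective e) (M : Matrix n n R) (v : m → R) :
    v ⬝ᵥ M.submatrix e e *ᵥ v =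
      Function.extend e v 0 ⬝ᵥ M *ᵥ Function.extend e v 0 := by
  rw [submatrix_mulVec_eq_comp he, dotProduct_comm, dotProduct_comm _ (M *ᵥ _),
    dotProduct_extend_zero he]

end Submatrix

section Eigenvalues

variable {n : Type*} [Fintype n] [DecidableEq n] {A : Matrix n n ℝ}

theorem IsHermitian.dotProduct_mulVec_self_eq_sum (hA : A.IsHermitian) (x : n → ℝ) :
    x ⬝ᵥ A *ᵥ x =
      ∑ i, hA.eigenvalues i * ((hA.eigenvectorUnitary : Matrix n n ℝ)ᵀ *ᵥ x) i ^ 2 := by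
  have hU : star (hA.eigenvectorUnitary : Matrix n n ℝ) =
      (hA.eigenvectorUnitary : Matrix n n ℝ)ᵀ :=
    conjTranspose_eq_transpose_of_trivial _
  conv_lhs => rw [hA.spectral_theorem, Unitary.conjStarAlgAut_apply, hU]
  rw [dotProduct_mul_mul_transpose_mulVec, dotProduct_diagonal_mulVec_self]
  rfl

/-- The coordinates along the eigenvectors with negative eigenvalue are injective on `W`. -/
theorem IsHermitian.finrank_le_card_eigenvalues_neg (hA : A.IsHermitian)
    (W : Submodule ℝ (n → ℝ)) (hW : ∀ x ∈ W, x ≠ 0 → x ⬝ᵥ A *ᵥ x < 0) :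
    Module.finrank ℝ W ≤ (Finset.univ.filter fun i => hA.eigenvalues i < 0).card := by
  set S := Finset.univ.filter fun i => hA.eigenvalues i < 0
  let F : (n → ℝ) →ₗ[ℝ] (S → ℝ) :=
    LinearMap.funLeft ℝ ℝ Subtype.val ∘ₗ (hA.eigenvectorUnitary : Matrix n n ℝ)ᵀ.mulVecLin
  have hinj : Function.Injective (F ∘ₗ W.subtype) := by
    rw [← LinearMap.ker_eq_bot, LinearMap.ker_eq_bot']
    intro w hw
    by_contra hw0
    have hvanish : ∀ i ∈ S, ((hA.eigenvectorUnitary : Matrix n n ℝ)ᵀ *ᵥ (w : n → ℝ)) i = 0 :=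
      fun i hi => congrFun hw ⟨i, hi⟩
    have hnonneg : 0 ≤ (w : n → ℝ) ⬝ᵥ A *ᵥ (w : n → ℝ) := by
      rw [hA.dotProduct_mulVec_self_eq_sum]
      refine Finset.sum_nonneg fun i _ => ?_
      by_cases hi : i ∈ S
      · rw [hvanish i hi]
        simp
      · have : 0 ≤ hA.eigenvalues i := by simpa [S] using hi
        positivity
    exact (hW _ w.2 (by simpa using hw0)).not_ge hnonneg
  simpa using LinearMap.finrank_le_finrank_of_injective hinj

theorem IsHermitian.exists_eigenvalues_pos (hA : A.IsHermitian) {x : n → ℝ}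
    (hx : 0 < x ⬝ᵥ A *ᵥ x) : ∃ i, 0 < hA.eigenvalues i := by
  by_contra! h
  rw [hA.dotProduct_mulVec_self_eq_sum] at hx
  exact hx.not_ge <| Finset.sum_nonpos fun i _ =>
    mul_nonpos_of_nonpos_of_nonneg (h i) (sq_nonneg _)

theorem IsHermitian.signature_of_neg_on_ker (hA : A.IsHermitian) {x : n → ℝ}
    (hx : 0 < x ⬝ᵥ A *ᵥ x) (f : (n → ℝ) →ₗ[ℝ] ℝ)
    (hf : ∀ y, f y = 0 → y ≠ 0 → y ⬝ᵥ A *ᵥ y < 0) :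
    (Finset.univ.filter fun i => 0 < hA.eigenvalues i).card = 1 ∧
      (Finset.univ.filter fun i => hA.eigenvalues i < 0).card = Fintype.card n - 1 ∧
      A.det ≠ 0 := by
  have hker : Fintype.card n ≤ Module.finrank ℝ (LinearMap.ker f) + 1 := by
    have := f.finrank_range_add_finrank_ker
    have := Submodule.finrank_le (LinearMap.range f)
    simp_all only [Module.finrank_self, Module.finrank_fintype_fun_eq_card]
    omega
  have hNeg := hA.finrank_le_card_eigenvalues_neg (LinearMap.ker f) fun y hy =>
    hf y (LinearMap.mem_ker.mp hy)
  obtain ⟨i₀, hi₀⟩ := hA.exists_eigenvalues_pos hx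
  set Pos := Finset.univ.filter fun i => 0 < hA.eigenvalues i
  set Neg := Finset.univ.filter fun i => hA.eigenvalues i < 0
  have hPos : 1 ≤ Pos.card := Finset.card_pos.mpr ⟨i₀, by simpa [Pos] using hi₀⟩
  have hdisj : Disjoint Pos Neg := Finset.disjoint_filter.mpr fun i _ h₁ h₂ => h₁.not_gt h₂
  have hsum : Pos.card + Neg.card ≤ Fintype.card n := by
    rw [← Finset.card_union_of_disjoint hdisj]
    exact Finset.card_le_univ _
  have hcover : Pos ∪ Neg = Finset.univ := by
    apply Finset.eq_univ_of_card
    rw [Finset.card_union_of_disjoint hdisj]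
    omega
  refine ⟨by omega, by omega, ?_⟩
  rw [hA.det_eq_prod_eigenvalues]
  refine Finset.prod_ne_zero_iff.mpr fun i _ => ?_
  have hi : i ∈ Pos ∪ Neg := hcover ▸ Finset.mem_univ i
  simp only [Finset.mem_union, Finset.mem_filter, Finset.mem_univ, true_and, Pos, Neg] at hi
  simpa using hi.elim ne_of_gt ne_of_lt

end Eigenvalues

end Matrix

namespace SimpleGraph

section Metric

variable {V : Type*} {G T : SimpleGraph V} {u v w : V}

theorem Walk.dist_add_dist_of_mem_support {p : G.Walk u v} (hp : p.length = G.dist u v)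
    (hw : w ∈ p.support) : G.dist u w + G.dist w v = G.dist u v := by
  have hsplit := congrArg Walk.length (p.take_spec hw)
  rw [Walk.length_append] at hsplit
  have := dist_le (p.takeUntil w hw)
  have := dist_le (p.dropUntil w hw)
  have := (p.takeUntil w hw).reachable.dist_triangle_left v
  omega

theorem IsTree.length_eq_dist_of_isPath (hT : T.IsTree) {p : T.Walk u v} (hp : p.IsPath) :
    p.length = T.dist u v := by
  obtain ⟨q, hq, hql⟩ := hT.connected.exists_path_of_dist u v
  have : p = q :=
    congrArg Subtype.val ((hT.isAcyclic.subsingleton_path u v).elim ⟨p, hp⟩ ⟨q, hq⟩)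
  rw [this, hql]

/-- The geodesics from `r` to `q` and from `i` to `j` are disjoint, so joining them by the edge
`q i` gives a path, which in a tree is a geodesic. -/
theorem IsTree.dist_eq_of_adj_of_dist_eq (hT : T.IsTree) {r q i j : V} (hqi : T.Adj q i)
    (hr : T.dist r i = T.dist r q + 1) (hj : T.dist j q = T.dist j i + 1) :
    T.dist r j = T.dist r q + 1 + T.dist i j := by
  obtain ⟨R, hR, hRl⟩ := hT.connected.exists_path_of_dist r q
  obtain ⟨P, hP, hPl⟩ := hT.connected.exists_path_of_dist i j
  have hdisj : ∀ w ∈ R.support, w ∉ P.support := by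
    intro w hwR hwP
    have := Walk.dist_add_dist_of_mem_support hRl hwR
    have := Walk.dist_add_dist_of_mem_support hPl hwP
    have := hT.connected.dist_triangle (u := r) (v := w) (w := i)
    have := hT.connected.dist_triangle (u := j) (v := w) (w := q)
    have := dist_comm (G := T) (u := i) (v := w)
    have := dist_comm (G := T) (u := i) (v := j)
    have := dist_comm (G := T) (u := j) (v := w)
    omega
  have hpath : (R.append (Walk.cons hqi P)).IsPath := by
    rw [Walk.isPath_def, Walk.support_append, Walk.support_cons, List.tail_cons]
    exact List.Nodup.append hR.support_nodup hP.support_nodup hdisj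
  rw [← hT.length_eq_dist_of_isPath hpath, Walk.length_append, Walk.length_cons, hRl, hPl]
  ring

theorem IsTree.exists_parent (hT : T.IsTree) (r : V) :
    ∃ p : V → V, ∀ i, i ≠ r → T.Adj i (p i) ∧ T.dist r (p i) + 1 = T.dist r i := by
  suffices ∀ i, i ≠ r → ∃ q, T.Adj i q ∧ T.dist r q + 1 = T.dist r i by
    choose! p hp using this
    exact ⟨p, hp⟩
  intro i hi
  obtain ⟨P, hPl⟩ := hT.connected.exists_walk_length_eq_dist i r
  cases P with
  | nil => exact absurd rfl hi
  | @cons _ q _ hiq Q =>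
    refine ⟨q, hiq, ?_⟩
    have := dist_le Q
    have := hT.connected.dist_triangle (u := i) (v := q) (w := r)
    rw [dist_eq_one_iff_adj.mpr hiq] at this
    rw [Walk.length_cons] at hPl
    rw [dist_comm (u := r), dist_comm (u := r)]
    omega

/-! In the names below, `i` is *between* `r` and `k` when `d r k = d r i + d i k`, and `q` is
the parent of `i` (seen from the root `r`) when `q` is adjacent to `i` and `d r q + 1 = d r i`. -/

variable {r i j k q : V}

theorem Connected.dist_parent_eq_add_one_of_between (hT : T.Connected) (hiq : T.Adj i q)
    (hq : T.dist r q + 1 = T.dist r i) (hk : T.dist r k = T.dist r i + T.dist i k) :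
    T.dist q k = T.dist i k + 1 := by
  have := hT.dist_triangle (u := r) (v := q) (w := k)
  have := hT.dist_triangle (u := q) (v := i) (w := k)
  have := dist_eq_one_iff_adj.mpr hiq.symm
  omega

theorem IsTree.dist_parent_add_one_eq_of_not_between (hT : T.IsTree) (hiq : T.Adj i q)
    (hq : T.dist r q + 1 = T.dist r i) (hk : ¬T.dist r k = T.dist r i + T.dist i k) :
    T.dist q k + 1 = T.dist i k := by
  rw [dist_comm (u := q), dist_comm (u := i)]
  refine ((hT.dist_eq_dist_add_one_of_adj k hiq).resolve_right fun h => hk ?_).symm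
  have := hT.dist_eq_of_adj_of_dist_eq hiq.symm hq.symm h
  omega

theorem IsTree.between_parent_of_between (hT : T.IsTree) (hjq : T.Adj j q)
    (hq : T.dist r q + 1 = T.dist r j) (hij : i ≠ j)
    (hj : T.dist r j = T.dist r i + T.dist i j) :
    T.dist r q = T.dist r i + T.dist i q ∧ T.dist i q + 1 = T.dist i j := by
  have hji : ¬T.dist r i = T.dist r j + T.dist j i := fun hi => by
    have := dist_comm (G := T) (u := i) (v := j)
    exact hij ((hT.connected.dist_eq_zero_iff).mp (by omega))
  have := hT.dist_parent_add_one_eq_of_not_between hjq hq hji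
  rw [dist_comm (u := q), dist_comm (u := j)] at this
  omega

theorem Connected.not_between_parent_of_not_between (hT : T.Connected) (hjq : T.Adj j q)
    (hq : T.dist r q + 1 = T.dist r j) (hj : ¬T.dist r j = T.dist r i + T.dist i j) :
    ¬T.dist r q = T.dist r i + T.dist i q := fun h => by
  have := hT.dist_triangle (u := r) (v := i) (w := j)
  have := hT.dist_triangle (u := i) (v := q) (w := j)
  have := dist_eq_one_iff_adj.mpr hjq.symm
  omega

end Metric

section Matrices

open Matrix

variable {V : Type*} {T : SimpleGraph V}

noncomputable def distPowMatrix (T : SimpleGraph V) (t : ℝ) : Matrix V V ℝ :=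
  of fun i j => t ^ T.dist i j

theorem isHermitian_distPowMatrix (t : ℝ) : (T.distPowMatrix t).IsHermitian := by
  ext i j
  simp [distPowMatrix, dist_comm]

variable [DecidableEq V]

def parentMatrix (r : V) (p : V → V) : Matrix V V ℝ :=
  of fun i l => if i ≠ r ∧ l = p i then 1 else 0

/-- Row `i ≠ r` is supported on the subtree below `i`. -/
noncomputable def subtreeMatrix (T : SimpleGraph V) (r : V) (t : ℝ) : Matrix V V ℝ :=
  of fun i k => if i = r then t ^ T.dist r k
    else if T.dist r k = T.dist r i + T.dist i k then (1 - t ^ 2) * t ^ T.dist i k else 0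

variable {r : V} {p : V → V} (t : ℝ)

theorem IsTree.subtreeMatrix_apply_eq_mul_apply_parent (hT : T.IsTree) {i j q : V}
    (hi : i ≠ r) (hij : i ≠ j) (hjq : T.Adj j q) (hq : T.dist r q + 1 = T.dist r j) :
    T.subtreeMatrix r t i j = t * T.subtreeMatrix r t i q := by
  simp only [subtreeMatrix, of_apply, hi, if_false]
  by_cases hb : T.dist r j = T.dist r i + T.dist i j
  · obtain ⟨hb', hd⟩ := hT.between_parent_of_between hjq hq hij hb
    rw [if_pos hb, if_pos hb', ← hd]
    ring
  · rw [if_neg hb, if_neg (hT.connected.not_between_parent_of_not_between hjq hq hb), mul_zero]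

variable [Fintype V]

theorem parentMatrix_mul_apply (A : Matrix V V ℝ) (i k : V) :
    (parentMatrix r p * A) i k = if i = r then 0 else A (p i) k := by
  by_cases hi : i = r <;> simp [parentMatrix, mul_apply, hi]

theorem mul_parentMatrix_transpose_apply (A : Matrix V V ℝ) (i j : V) :
    (A * (parentMatrix r p)ᵀ) i j = if j = r then 0 else A i (p j) := by
  by_cases hj : j = r <;> simp [parentMatrix, mul_apply, hj]

theorem IsTree.mul_distPowMatrix (hT : T.IsTree)
    (hp : ∀ i, i ≠ r → T.Adj i (p i) ∧ T.dist r (p i) + 1 = T.dist r i) :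
    (1 - t • parentMatrix r p) * T.distPowMatrix t = T.subtreeMatrix r t := by
  ext i k
  rw [sub_mul, one_mul, Matrix.smul_mul, Matrix.sub_apply, Matrix.smul_apply,
    parentMatrix_mul_apply]
  by_cases hi : i = r
  · simp [hi, subtreeMatrix, distPowMatrix]
  obtain ⟨hadj, hq⟩ := hp i hi
  simp only [subtreeMatrix, distPowMatrix, of_apply, hi, if_false, smul_eq_mul]
  split_ifs with hk
  · rw [hT.connected.dist_parent_eq_add_one_of_between hadj hq hk]
    ring
  · rw [← hT.dist_parent_add_one_eq_of_not_between hadj hq hk]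
    ring

theorem IsTree.subtreeMatrix_mul (hT : T.IsTree)
    (hp : ∀ i, i ≠ r → T.Adj i (p i) ∧ T.dist r (p i) + 1 = T.dist r i) :
    T.subtreeMatrix r t * (1 - t • parentMatrix r p)ᵀ =
      diagonal fun i => if i = r then 1 else 1 - t ^ 2 := by
  ext i j
  rw [transpose_sub, transpose_one, transpose_smul, mul_sub, mul_one, Matrix.mul_smul,
    Matrix.sub_apply, Matrix.smul_apply, mul_parentMatrix_transpose_apply, diagonal_apply]
  by_cases hj : j = r
  · rw [if_pos hj, hj]
    by_cases hi : i = r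
    · simp [subtreeMatrix, hi]
    have hnb : ¬T.dist r r = T.dist r i + T.dist i r := fun h => by
      have := hT.connected.pos_dist_of_ne hi
      rw [dist_self] at h
      omega
    simp only [subtreeMatrix, of_apply, hi, hnb, if_false, smul_zero, sub_zero]
  obtain ⟨hadj, hq⟩ := hp j hj
  rw [if_neg hj, smul_eq_mul]
  by_cases hi : i = r
  · simp only [subtreeMatrix, of_apply, hi, if_true, Ne.symm hj, if_false, ← hq]
    ring
  by_cases hij : i = j
  · subst hij
    have hnb : ¬T.dist r (p i) = T.dist r i + T.dist i (p i) := by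
      rw [dist_eq_one_iff_adj.mpr hadj]
      omega
    simp [subtreeMatrix, hi, hnb]
  · rw [hT.subtreeMatrix_apply_eq_mul_apply_parent t hi hij hadj hq, if_neg hij, sub_self]

theorem IsTree.dotProduct_distPowMatrix_mulVec_neg (hT : T.IsTree) {t : ℝ} (ht : 1 < |t|)
    (r : V) {x : V → ℝ} (hx : x ≠ 0) (hxr : (T.distPowMatrix t *ᵥ x) r = 0) :
    x ⬝ᵥ T.distPowMatrix t *ᵥ x < 0 := by
  obtain ⟨p, hp⟩ := hT.exists_parent r
  have hLM := hT.mul_distPowMatrix t hp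
  refine dotProduct_mulVec_neg_of_mul_mul_transpose_eq_diagonal
    (L := 1 - t • parentMatrix r p) (d := fun i => if i = r then 1 else 1 - t ^ 2) (r := r)
    ?_ (by simp) (fun i hi => ?_) hx ?_
  · rw [hLM, hT.subtreeMatrix_mul t hp]
  · simpa [hi] using (one_lt_sq_iff_one_lt_abs t).mpr ht
  · rw [hLM]
    simpa [mulVec, dotProduct, subtreeMatrix, distPowMatrix] using hxr

end Matrices

end SimpleGraph

open SimpleGraph Matrix in
/-- **Signature of `A(t)[X]`.** For all sufficiently large real `t`, the
symmetric matrix `(t ^ d i j)_{i,j ∈ X}` has exactly one positive eigenvalue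
and `|X| − 1` negative eigenvalues (with multiplicity); in particular it is
nonsingular. -/
theorem signature_principal_minor (N : ℕ) (T : SimpleGraph (Fin N)) (hT : T.IsTree)
    (X : Finset (Fin N)) (hX : X.Nonempty) :
    ∃ t₀ : ℝ, ∀ t : ℝ, t₀ < t →
      ∃ hA : (Matrix.of fun i j : {x // x ∈ X} => t ^ T.dist i j).IsHermitian,
        (Finset.univ.filter fun i : {x // x ∈ X} => 0 < hA.eigenvalues i).card = 1 ∧
        (Finset.univ.filter fun i : {x // x ∈ X} => hA.eigenvalues i < 0).card = X.card - 1 ∧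
        (Matrix.of fun i j : {x // x ∈ X} => t ^ T.dist i j).det ≠ 0 := by
  obtain ⟨r, hr⟩ := hX
  refine ⟨1, fun t ht => ?_⟩
  have hA : ((T.distPowMatrix t).submatrix Subtype.val Subtype.val : Matrix X X ℝ).IsHermitian :=
    (isHermitian_distPowMatrix t).submatrix _
  refine ⟨hA, Fintype.card_coe X ▸ hA.signature_of_neg_on_ker (x := Pi.single ⟨r, hr⟩ 1) ?_
    (LinearMap.proj ⟨r, hr⟩ ∘ₗ ((T.distPowMatrix t).submatrix Subtype.val Subtype.val).mulVecLin)
    fun y hy hy0 => ?_⟩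
  · simp [distPowMatrix]
  rw [dotProduct_submatrix_mulVec Subtype.val_injective]
  refine hT.dotProduct_distPowMatrix_mulVec_neg (by rwa [abs_of_pos (by linarith)]) r ?_ ?_
  · exact fun h => hy0 <| funext fun a => by
      simpa [Subtype.val_injective.extend_apply] using congrFun h a
  · rwa [LinearMap.comp_apply, mulVecLin_apply, LinearMap.proj_apply,
      submatrix_mulVec_eq_comp Subtype.val_injective] at hy
end

section
/- Let W = (w_{ij}) be a symmetric real n×n matrix. Then W satisfies the four-point condition [4PC] if and only if there exists a real number t₀ such that for every real t > t₀, the real symmetric matrix (t^{w_{ij}})_{1≤i,j≤n} has at most one positive eigenvalue (counted with multiplicity). -/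
/-!
Write `A_t = (t ^ W i j)`. If `W` satisfies the four-point condition, fix a base point `p`; then
`D i j = W i j - W i p - W j p + W p p` is nonpositive and ultrametric
(`D i j ≤ max (D i k) (D j k)`), so `A_t i j = x i * x j * t ^ D i j` with
`x i = t ^ (W i p - W p p / 2)` and, for `t ≥ 1`, `V = 1 - t ^ D` is a nonnegative ultrametric
matrix. Such matrices are positive semidefinite (split off the minimal entry; what remains is block
diagonal), hence `wᵀ A_t w ≤ (x ⬝ᵥ w) ^ 2`: the form of `A_t` is nonpositive on the hyperplane `x⊥`,
which leaves room for at most one positive eigenvalue.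

Conversely, a symmetric matrix with at most one positive eigenvalue is nonpositive on a hyperplane,
so its quadratic form `Q` and bilinear form `B` satisfy the reverse Cauchy–Schwarz inequality
`Q u * Q v ≤ B u v ^ 2` whenever `0 < Q u`.
Testing it on `u = a eᵢ + b eⱼ`, `v = c eₖ + d eₗ` with balanced weights gives
`t ^ (W i j + W k l) ≤ 4 * t ^ max (W i k + W j l) (W i l + W j k)` for all large `t`,
which forces the four-point condition.
-/

open scoped Classical

open Matrix Filter

def FourPointCondition {ι : Type*} (W : Matrix ι ι ℝ) : Prop :=
  ∀ i j k l, W i j + W k l ≤ max (W i k + W j l) (W i l + W j k)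

theorem Finset.sum_sum_eq_add_of_cross_eq_zero {ι M : Type*} [AddCommMonoid M] (s : Finset ι)
    (p : ι → Prop) [DecidablePred p] (f : ι → ι → M)
    (hf : ∀ i ∈ s, ∀ j ∈ s, p i → ¬ p j → f i j = 0 ∧ f j i = 0) :
    ∑ i ∈ s, ∑ j ∈ s, f i j =
      ∑ i ∈ s with p i, ∑ j ∈ s with p j, f i j +
        ∑ i ∈ s with ¬ p i, ∑ j ∈ s with ¬ p j, f i j := by
  rw [← Finset.sum_filter_add_sum_filter_not s p]
  congr 1 <;> refine Finset.sum_congr rfl fun i hi => ?_ <;>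
    rw [← Finset.sum_filter_add_sum_filter_not s p (f i)] <;>
    rw [Finset.mem_filter] at hi
  · rw [Finset.sum_eq_zero fun j hj => (hf i hi.1 j (Finset.mem_filter.mp hj).1 hi.2
      (Finset.mem_filter.mp hj).2).1, add_zero]
  · rw [Finset.sum_eq_zero fun j hj => (hf j (Finset.mem_filter.mp hj).1 i hi.1
      (Finset.mem_filter.mp hj).2 hi.2).2, zero_add]

theorem sum_sum_mul_eq_mul_sq_add {ι : Type*} (s : Finset ι) (y : ι → ℝ) (V : ι → ι → ℝ) (c : ℝ) :
    ∑ i ∈ s, ∑ j ∈ s, y i * y j * V i j =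
      c * (∑ i ∈ s, y i) ^ 2 + ∑ i ∈ s, ∑ j ∈ s, y i * y j * (V i j - c) := by
  have hterm : ∀ i j, y i * y j * V i j = c * (y i * y j) + y i * y j * (V i j - c) :=
    fun i j => by ring
  simp only [hterm, Finset.sum_add_distrib, ← Finset.mul_sum, sq, Finset.sum_mul_sum]

section Ultrametric

variable {ι : Type*} {V : ι → ι → ℝ} {s : Finset ι}

def IsUltrametricOn (V : ι → ι → ℝ) (s : Finset ι) : Prop :=
  (∀ i ∈ s, ∀ j ∈ s, V i j = V j i) ∧ (∀ i ∈ s, ∀ j ∈ s, 0 ≤ V i j) ∧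
    ∀ i ∈ s, ∀ j ∈ s, ∀ k ∈ s, min (V i k) (V j k) ≤ V i j

theorem IsUltrametricOn.mono {t : Finset ι} (hV : IsUltrametricOn V s)
    (hts : t ⊆ s) : IsUltrametricOn V t :=
  ⟨fun i hi j hj => hV.1 i (hts hi) j (hts hj), fun i hi j hj => hV.2.1 i (hts hi) j (hts hj),
    fun i hi j hj k hk => hV.2.2 i (hts hi) j (hts hj) k (hts hk)⟩

theorem IsUltrametricOn.sub_const (hV : IsUltrametricOn V s) {c : ℝ}
    (hc : ∀ i ∈ s, ∀ j ∈ s, c ≤ V i j) : IsUltrametricOn (fun i j => V i j - c) s :=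
  ⟨fun i hi j hj => by simp only [hV.1 i hi j hj], fun i hi j hj => sub_nonneg.mpr (hc i hi j hj),
    fun i hi j hj k hk => by
      simpa only [min_sub_sub_right] using sub_le_sub_right (hV.2.2 i hi j hj k hk) c⟩

theorem IsUltrametricOn.le_of_forall_le_row (hV : IsUltrametricOn V s) {a : ι} (ha : a ∈ s)
    {c : ℝ} (hc : ∀ j ∈ s, c ≤ V a j) : ∀ i ∈ s, ∀ j ∈ s, c ≤ V i j :=
  fun i hi j hj => (le_min (hV.1 a ha i hi ▸ hc i hi) (hV.1 a ha j hj ▸ hc j hj)).trans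
    (hV.2.2 i hi j hj a ha)

theorem IsUltrametricOn.sum_sum_mul_nonneg (hV : IsUltrametricOn V s) (y : ι → ℝ) :
    0 ≤ ∑ i ∈ s, ∑ j ∈ s, y i * y j * V i j := by
  induction s using Finset.strongInduction generalizing V with
  | H s ih =>
    rcases s.eq_empty_or_nonempty with rfl | ⟨a, ha⟩
    · simp
    obtain ⟨b, hb, hmin⟩ := s.exists_min_image (V a) ⟨a, ha⟩
    rw [sum_sum_mul_eq_mul_sq_add s y V (V a b)]
    refine add_nonneg (mul_nonneg (hV.2.1 a ha b hb) (sq_nonneg _)) ?_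
    set U := fun i j => V i j - V a b
    have hU : IsUltrametricOn U s := hV.sub_const (hV.le_of_forall_le_row ha hmin)
    change 0 ≤ ∑ i ∈ s, ∑ j ∈ s, y i * y j * U i j
    have ⟨hU_symm, hU_nonneg, hU_ultra⟩ := hU
    rcases (hU_nonneg a ha a ha).eq_or_lt with haa | haa
    · -- `U a a` dominates row `a`, so the whole row vanishes and `a` can be dropped
      have hrow : ∀ j ∈ s, U a j = 0 := fun j hj =>
        le_antisymm (haa ▸ by simpa using hU_ultra a ha a ha j hj) (hU_nonneg a ha j hj)
      rw [← Finset.sum_erase s (a := a)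
        (Finset.sum_eq_zero fun j hj => by rw [hrow j hj, mul_zero])]
      rw [Finset.sum_congr rfl fun i hi => (Finset.sum_erase s (a := a)
        (by rw [hU_symm i (Finset.mem_of_mem_erase hi) a ha, hrow i (Finset.mem_of_mem_erase hi),
          mul_zero])).symm]
      exact ih _ (Finset.erase_ssubset ha) (hU.mono (Finset.erase_subset a s))
    · rw [Finset.sum_sum_eq_add_of_cross_eq_zero s (fun j => 0 < U a j)]
      · exact add_nonneg
          (ih _ (Finset.filter_ssubset.mpr ⟨b, hb, by simp [U]⟩)
            (hU.mono (Finset.filter_subset ..)))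
          (ih _ (Finset.filter_ssubset.mpr ⟨a, ha, not_not.mpr haa⟩)
            (hU.mono (Finset.filter_subset ..)))
      · intro i hi j hj hpi hpj
        have hj0 : U a j = 0 := le_antisymm (not_lt.mp hpj) (hU_nonneg a ha j hj)
        have hji : U j i = 0 := by
          refine le_antisymm ?_ (hU_nonneg j hj i hi)
          have := hU_ultra a ha j hj i hi
          rw [hj0, min_le_iff] at this
          exact this.resolve_left hpi.not_ge
        rw [hU_symm i hi j hj, hji, mul_zero, mul_zero]
        exact ⟨rfl, rfl⟩

end Ultrametric

theorem dotProduct_mulVec_le_sq_of_isUltrametricOn {ι : Type*} [Fintype ι] {A : Matrix ι ι ℝ}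
    {x : ι → ℝ} {V : ι → ι → ℝ} (hA : ∀ i j, A i j = x i * x j * (1 - V i j))
    (hV : IsUltrametricOn V Finset.univ) (v : ι → ℝ) : v ⬝ᵥ A *ᵥ v ≤ (x ⬝ᵥ v) ^ 2 := by
  have hdiff : (x ⬝ᵥ v) ^ 2 - v ⬝ᵥ A *ᵥ v = ∑ i, ∑ j, (x i * v i) * (x j * v j) * V i j := by
    rw [sq, dotProduct, Finset.sum_mul_sum]
    simp only [dotProduct, mulVec, Finset.mul_sum, ← Finset.sum_sub_distrib, hA]
    exact Finset.sum_congr rfl fun i _ => Finset.sum_congr rfl fun j _ => by ring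
  linarith [hV.sum_sum_mul_nonneg fun i => x i * v i]

theorem FourPointCondition.isUltrametricOn_one_sub_rpow {ι : Type*} [Fintype ι]
    {W : Matrix ι ι ℝ} (h : FourPointCondition W) (hW : W.IsSymm) (p : ι) {t : ℝ} (ht : 1 ≤ t) :
    IsUltrametricOn (fun i j => 1 - t ^ (W i j - W i p - W j p + W p p)) Finset.univ := by
  set D := fun i j => W i j - W i p - W j p + W p p
  have hD_nonpos : ∀ i j, D i j ≤ 0 := fun i j => by
    have := h i j p p
    simp only [max_self] at this
    simp only [D]
    linarith
  have hD_ultra : ∀ i j k, D i j ≤ max (D i k) (D j k) := fun i j k => by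
    rcases le_max_iff.mp (h i j k p) with h' | h'
    · exact le_max_of_le_left (by simp only [D]; linarith)
    · exact le_max_of_le_right (by simp only [D]; linarith)
  refine ⟨fun i _ j _ => by simp only [hW.apply]; ring_nf,
    fun i _ j _ => sub_nonneg.mpr (Real.rpow_le_one_of_one_le_of_nonpos ht (hD_nonpos i j)),
    fun i _ j _ k _ => ?_⟩
  rw [min_sub_sub_left]
  exact sub_le_sub_left ((Real.rpow_le_rpow_of_exponent_le ht (hD_ultra i j k)).trans
    (Real.monotone_rpow_of_base_ge_one ht).map_max.le) 1

theorem FourPointCondition.exists_nonpos_on_orthogonal {ι : Type*} [Fintype ι]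
    {W : Matrix ι ι ℝ} (h : FourPointCondition W) (hW : W.IsSymm) {t : ℝ} (ht : 1 ≤ t) :
    ∃ e : ι → ℝ, ∀ w, e ⬝ᵥ w = 0 → w ⬝ᵥ (of fun i j => t ^ W i j) *ᵥ w ≤ 0 := by
  rcases isEmpty_or_nonempty ι with _ | ⟨⟨p⟩⟩
  · exact ⟨0, fun w _ => by simp [dotProduct, Finset.univ_eq_empty]⟩
  refine ⟨fun i => t ^ (W i p - W p p / 2), fun w hw => ?_⟩
  have hbound := dotProduct_mulVec_le_sq_of_isUltrametricOn (A := of fun i j => t ^ W i j)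
    (x := fun i => t ^ (W i p - W p p / 2)) (fun i j => by
      simp only [of_apply, sub_sub_cancel, ← Real.rpow_add (zero_lt_one.trans_le ht)]
      congr 1
      ring)
    (h.isUltrametricOn_one_sub_rpow hW p ht) w
  rwa [hw, sq, zero_mul] at hbound

namespace Matrix.IsHermitian

variable {ι : Type*} [Fintype ι] [DecidableEq ι] {A : Matrix ι ι ℝ}

theorem sum_dotProduct_smul_eigenvectorBasis (hA : A.IsHermitian) (w : ι → ℝ) :
    ∑ k, (⇑(hA.eigenvectorBasis k) ⬝ᵥ w) • ⇑(hA.eigenvectorBasis k) = w := by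
  simpa [EuclideanSpace.inner_eq_star_dotProduct, dotProduct_comm] using
    congrArg WithLp.ofLp ((hA.eigenvectorBasis).sum_repr' (WithLp.toLp 2 w))

theorem dotProduct_mulVec_eq_sum (hA : A.IsHermitian) (w : ι → ℝ) :
    w ⬝ᵥ A *ᵥ w = ∑ k, hA.eigenvalues k * (⇑(hA.eigenvectorBasis k) ⬝ᵥ w) ^ 2 := by
  nth_rewrite 2 [← hA.sum_dotProduct_smul_eigenvectorBasis w]
  rw [mulVec_sum, dotProduct_sum]
  refine Finset.sum_congr rfl fun k _ => ?_
  rw [mulVec_smul, hA.mulVec_eigenvectorBasis, dotProduct_smul, dotProduct_smul,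
    dotProduct_comm w, smul_eq_mul, smul_eq_mul]
  ring

theorem eigenvectorBasis_dotProduct (hA : A.IsHermitian) (i j : ι) :
    ⇑(hA.eigenvectorBasis i) ⬝ᵥ ⇑(hA.eigenvectorBasis j) = if i = j then 1 else 0 := by
  simpa [EuclideanSpace.inner_eq_star_dotProduct, dotProduct_comm, eq_comm] using
    orthonormal_iff_ite.mp (hA.eigenvectorBasis).orthonormal j i

theorem dotProduct_mulVec_smul_add_smul_eigenvectorBasis (hA : A.IsHermitian) {i j : ι}
    (hij : i ≠ j) (α β : ℝ) :
    (α • ⇑(hA.eigenvectorBasis i) + β • ⇑(hA.eigenvectorBasis j)) ⬝ᵥ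
        A *ᵥ (α • ⇑(hA.eigenvectorBasis i) + β • ⇑(hA.eigenvectorBasis j)) =
      hA.eigenvalues i * α ^ 2 + hA.eigenvalues j * β ^ 2 := by
  simp only [mulVec_add, mulVec_smul, hA.mulVec_eigenvectorBasis, add_dotProduct, dotProduct_add,
    smul_dotProduct, dotProduct_smul, hA.eigenvectorBasis_dotProduct, hij, hij.symm, smul_eq_mul]
  simp
  ring

theorem card_pos_eigenvalues_le_one_iff (hA : A.IsHermitian) :
    (Finset.univ.filter fun k => 0 < hA.eigenvalues k).card ≤ 1 ↔
      ∃ e : ι → ℝ, ∀ w, e ⬝ᵥ w = 0 → w ⬝ᵥ A *ᵥ w ≤ 0 := by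
  set b := hA.eigenvectorBasis
  constructor
  · intro hcard
    by_cases hpos : ∃ m, 0 < hA.eigenvalues m
    · obtain ⟨m, hm⟩ := hpos
      refine ⟨b m, fun w hw => ?_⟩
      rw [hA.dotProduct_mulVec_eq_sum]
      refine Finset.sum_nonpos fun k _ => ?_
      rcases le_or_gt (hA.eigenvalues k) 0 with hk | hk
      · exact mul_nonpos_of_nonpos_of_nonneg hk (sq_nonneg _)
      · obtain rfl : k = m :=
          Finset.card_le_one.mp hcard k (by simpa using hk) m (by simpa using hm)
        simp [b, hw]
    · simp only [not_exists, not_lt] at hpos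
      exact ⟨0, fun w _ => hA.dotProduct_mulVec_eq_sum w ▸
        Finset.sum_nonpos fun k _ => mul_nonpos_of_nonpos_of_nonneg (hpos k) (sq_nonneg _)⟩
  · rintro ⟨e, he⟩
    by_contra! hcard
    obtain ⟨i, hi, j, hj, hij⟩ := Finset.one_lt_card.mp hcard
    simp only [Finset.mem_filter, Finset.mem_univ, true_and] at hi hj
    by_cases hei : e ⬝ᵥ b i = 0
    · have := he ((1 : ℝ) • b i + (0 : ℝ) • b j) (by simp [hei])
      rw [hA.dotProduct_mulVec_smul_add_smul_eigenvectorBasis hij] at this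
      linarith
    · have := he ((e ⬝ᵥ b j) • b i + (-(e ⬝ᵥ b i)) • b j) (by
        simp only [dotProduct_add, dotProduct_smul, smul_eq_mul]; ring)
      rw [hA.dotProduct_mulVec_smul_add_smul_eigenvectorBasis hij] at this
      have : 0 < (e ⬝ᵥ b i) ^ 2 := by positivity
      nlinarith [sq_nonneg (e ⬝ᵥ b j)]

end Matrix.IsHermitian

section ReverseCauchySchwarz

variable {ι : Type*} [Fintype ι]

theorem Matrix.IsSymm.mul_le_sq_of_nonpos_on_orthogonal {A : Matrix ι ι ℝ} (hA : A.IsSymm)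
    {e : ι → ℝ} (he : ∀ w, e ⬝ᵥ w = 0 → w ⬝ᵥ A *ᵥ w ≤ 0) {u : ι → ℝ}
    (hu : 0 < u ⬝ᵥ A *ᵥ u) (v : ι → ℝ) :
    (u ⬝ᵥ A *ᵥ u) * (v ⬝ᵥ A *ᵥ v) ≤ (u ⬝ᵥ A *ᵥ v) ^ 2 := by
  have heu : e ⬝ᵥ u ≠ 0 := fun h => hu.not_ge (he u h)
  set r := (e ⬝ᵥ v) / (e ⬝ᵥ u)
  have hvu : v ⬝ᵥ A *ᵥ u = u ⬝ᵥ A *ᵥ v := by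
    rw [← dotProduct_transpose_mulVec, hA.eq]
  have hw : (v - r • u) ⬝ᵥ A *ᵥ (v - r • u) ≤ 0 :=
    he _ (by rw [dotProduct_sub, dotProduct_smul, smul_eq_mul, div_mul_cancel₀ _ heu, sub_self])
  have hexpand : (v - r • u) ⬝ᵥ A *ᵥ (v - r • u) =
      v ⬝ᵥ A *ᵥ v - 2 * r * (u ⬝ᵥ A *ᵥ v) + r ^ 2 * (u ⬝ᵥ A *ᵥ u) := by
    simp only [mulVec_sub, mulVec_smul, sub_dotProduct, dotProduct_sub, smul_dotProduct,
      dotProduct_smul, smul_eq_mul, hvu]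
    ring
  nlinarith [sq_nonneg (u ⬝ᵥ A *ᵥ v - r * (u ⬝ᵥ A *ᵥ u))]

variable [DecidableEq ι]

theorem single_add_single_dotProduct_mulVec (A : Matrix ι ι ℝ) (i j k l : ι) (a b c d : ℝ) :
    (Pi.single i a + Pi.single j b) ⬝ᵥ A *ᵥ (Pi.single k c + Pi.single l d) =
      a * c * A i k + a * d * A i l + b * c * A j k + b * d * A j l := by
  simp only [mulVec_add, add_dotProduct, dotProduct_add, single_dotProduct, mulVec_single]
  simp
  ring

theorem Matrix.IsSymm.four_mul_le_sq_of_nonpos_on_orthogonal {A : Matrix ι ι ℝ} (hA : A.IsSymm)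
    (hpos : ∀ i j, 0 < A i j) {e : ι → ℝ} (he : ∀ w, e ⬝ᵥ w = 0 → w ⬝ᵥ A *ᵥ w ≤ 0)
    (i j k l : ι) {a b c d : ℝ} (ha : 0 < a) (hb : 0 < b) (hc : 0 < c) (hd : 0 < d) :
    4 * (a * b * A i j) * (c * d * A k l) ≤
      (a * c * A i k + a * d * A i l + b * c * A j k + b * d * A j l) ^ 2 := by
  have hQ : ∀ i j a b, 0 < a → 0 < b → 2 * (a * b * A i j) ≤
      (Pi.single i a + Pi.single j b) ⬝ᵥ A *ᵥ (Pi.single i a + Pi.single j b) := by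
    intro i j a b ha hb
    rw [single_add_single_dotProduct_mulVec, hA.apply i j]
    nlinarith [hpos i i, hpos j j, mul_pos ha ha, mul_pos hb hb]
  set u : ι → ℝ := Pi.single i a + Pi.single j b
  set v : ι → ℝ := Pi.single k c + Pi.single l d
  have hu : 0 < 2 * (a * b * A i j) := by have := hpos i j; positivity
  have hv : 0 < 2 * (c * d * A k l) := by have := hpos k l; positivity
  calc 4 * (a * b * A i j) * (c * d * A k l) = 2 * (a * b * A i j) * (2 * (c * d * A k l)) := by
        ring
    _ ≤ (u ⬝ᵥ A *ᵥ u) * (v ⬝ᵥ A *ᵥ v) :=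
        mul_le_mul (hQ i j a b ha hb) (hQ k l c d hc hd) hv.le (hu.trans_le (hQ i j a b ha hb)).le
    _ ≤ (u ⬝ᵥ A *ᵥ v) ^ 2 :=
        hA.mul_le_sq_of_nonpos_on_orthogonal he (hu.trans_le (hQ i j a b ha hb)) v
    _ = _ := by rw [single_add_single_dotProduct_mulVec]

end ReverseCauchySchwarz

theorem le_of_eventually_rpow_le_mul_rpow {x y C : ℝ} (h : ∀ᶠ t in atTop, t ^ x ≤ C * t ^ y) :
    x ≤ y := by
  by_contra! hxy
  obtain ⟨t, ht, hgt, hpos⟩ := (h.and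
    (((tendsto_rpow_atTop (sub_pos.mpr hxy)).eventually_gt_atTop C).and
      (eventually_gt_atTop 0))).exists
  have hsplit : t ^ x = t ^ (x - y) * t ^ y := by rw [← Real.rpow_add hpos, sub_add_cancel]
  nlinarith [Real.rpow_pos_of_pos hpos y]

section Tropical

variable {ι : Type*} [Fintype ι] [DecidableEq ι]

theorem rpow_add_le_four_mul_rpow_max {W : Matrix ι ι ℝ} (hW : W.IsSymm) {t : ℝ} (ht : 1 ≤ t)
    {e : ι → ℝ} (he : ∀ w, e ⬝ᵥ w = 0 → w ⬝ᵥ (of fun i j => t ^ W i j) *ᵥ w ≤ 0) (i j k l : ι) :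
    t ^ (W i j + W k l) ≤ 4 * t ^ max (W i k + W j l) (W i l + W j k) := by
  have ht0 : 0 < t := zero_lt_one.trans_le ht
  set Y := max (W i k + W j l) (W i l + W j k)
  -- the weights balance the four terms of the cross product in pairs
  set α := (W j l - W i k + W j k - W i l) / 4
  set γ := (W j l - W i k - W j k + W i l) / 4
  have key := (hW.map (t ^ ·)).four_mul_le_sq_of_nonpos_on_orthogonal
    (fun i j => Real.rpow_pos_of_pos ht0 _) he i j k l (a := t ^ α) (b := t ^ (-α))
    (c := t ^ γ) (d := t ^ (-γ)) (by positivity) (by positivity) (by positivity) (by positivity)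
  have hmul : ∀ x y z : ℝ, t ^ x * t ^ y * t ^ z = t ^ (x + y + z) := fun x y z => by
    rw [← Real.rpow_add ht0, ← Real.rpow_add ht0]
  simp only [map_apply, hmul] at key
  rw [show α + -α + W i j = W i j by ring, show γ + -γ + W k l = W k l by ring,
    show α + γ + W i k = (W i k + W j l) / 2 by ring,
    show -α + -γ + W j l = (W i k + W j l) / 2 by ring,
    show α + -γ + W i l = (W i l + W j k) / 2 by ring,
    show -α + γ + W j k = (W i l + W j k) / 2 by ring] at key
  have hle : ∀ z ≤ Y, t ^ (z / 2) ≤ t ^ (Y / 2) := fun z hz =>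
    Real.rpow_le_rpow_of_exponent_le ht (by linarith)
  have hsum : t ^ ((W i k + W j l) / 2) + t ^ ((W i l + W j k) / 2) + t ^ ((W i l + W j k) / 2) +
      t ^ ((W i k + W j l) / 2) ≤ 4 * t ^ (Y / 2) := by
    linarith [hle _ (le_max_left _ _), hle _ (le_max_right _ _)]
  have hsq : (4 * t ^ (Y / 2)) ^ 2 = 16 * t ^ Y := by
    rw [mul_pow, sq (t ^ _), ← Real.rpow_add ht0, add_halves]
    norm_num
  rw [Real.rpow_add ht0]
  nlinarith [pow_le_pow_left₀ (by positivity) hsum 2]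

theorem fourPointCondition_of_eventually_nonpos_on_orthogonal {W : Matrix ι ι ℝ} (hW : W.IsSymm)
    (h : ∀ᶠ t in atTop, ∃ e : ι → ℝ, ∀ w, e ⬝ᵥ w = 0 → w ⬝ᵥ (of fun i j => t ^ W i j) *ᵥ w ≤ 0) :
    FourPointCondition W := fun i j k l =>
  le_of_eventually_rpow_le_mul_rpow ((h.and (eventually_ge_atTop 1)).mono
    fun _ ⟨⟨_, he⟩, ht⟩ => rpow_add_le_four_mul_rpow_max hW ht he i j k l)

end Tropical

/-- **Tropicalization of matrices with at most one positive eigenvalue.**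
A symmetric real matrix `W` satisfies the four-point condition iff for all
sufficiently large `t` the symmetric matrix `(t ^ w i j)` (real power) has at
most one positive eigenvalue, counted with multiplicity. -/
theorem fourPointCondition_iff_at_most_one_positive_eigenvalue
    (n : ℕ) (W : Matrix (Fin n) (Fin n) ℝ) (hW : W.IsSymm) :
    (∀ i j k l : Fin n, W i j + W k l ≤ max (W i k + W j l) (W i l + W j k)) ↔
      ∃ t₀ : ℝ, ∀ t : ℝ, t₀ < t →
        ∃ hA : (Matrix.of fun i j : Fin n => t ^ W i j).IsHermitian,
          (Finset.univ.filter fun i : Fin n => 0 < hA.eigenvalues i).card ≤ 1 := by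
  have hherm : ∀ t : ℝ, (of fun i j : Fin n => t ^ W i j).IsHermitian := fun t =>
    isHermitian_iff_isSymm.mpr (hW.map (t ^ ·))
  constructor
  · intro h
    exact ⟨1, fun t ht => ⟨hherm t, (hherm t).card_pos_eigenvalues_le_one_iff.mpr
      (FourPointCondition.exists_nonpos_on_orthogonal h hW ht.le)⟩⟩
  · rintro ⟨t₀, ht₀⟩
    refine fourPointCondition_of_eventually_nonpos_on_orthogonal hW
      ((eventually_gt_atTop t₀).mono fun t ht => ?_)
    obtain ⟨hA, hcard⟩ := ht₀ t ht
    exact hA.card_pos_eigenvalues_le_one_iff.mp hcard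
end

section
/- Let T be a tree with vertex set V = {1,2,…,N}, and define the odd-dissimilarity map D° : 2^V → ℤ ∪ {−∞} by D°(X) = |O_X| if |X| is even and D°(X) = −∞ if |X| is odd. Then D° is a valuated Δ-matroid: for all X, Y ⊆ V and every i ∈ X △ Y, D°(X) + D°(Y) ≤ max_{j ∈ (X △ Y) ∖ {i}} ( D°(X △ {i,j}) + D°(Y △ {i,j}) ), where △ denotes symmetric difference, addition in ℤ ∪ {−∞} satisfies a + (−∞) = −∞, and the maximum over the empty set is −∞. -/
open scoped Classical symmDiff

/-- An edge `e` of `T` is odd w.r.t. `X` if each of the two components of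
`T − e` contains an odd number of vertices of `X`. -/
def OddEdge {N : ℕ} (T : SimpleGraph (Fin N)) (X : Finset (Fin N)) (e : Sym2 (Fin N)) : Prop :=
  e ∈ T.edgeSet ∧
    ∀ u ∈ e, Odd {x : Fin N | x ∈ X ∧ (T.deleteEdges {e}).Reachable u x}.ncard

/-- The odd-dissimilarity map of a tree: `D°(X) = |O_X|` if `|X|` is even and
`−∞` otherwise, with values in `ℤ ∪ {−∞}`. -/
noncomputable def oddDissimilarity {N : ℕ} (T : SimpleGraph (Fin N))
    (X : Finset (Fin N)) : WithBot ℤ :=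
  if Even X.card then (({e | OddEdge T X e}.ncard : ℤ) : WithBot ℤ) else ⊥

/-!
For even sets the odd edges of a tree depend linearly on the set, `O_{X ∆ W} = O_X ∆ O_W`, and
`O_Z` is a `Z`-join: its odd-degree vertices are exactly the vertices of `Z`, because the sides
of the edges at a vertex `v` partition the other vertices. Put `Z = X ∆ Y`. The handshake lemma
in the component of `i` in the forest `O_Z` yields `j ∈ Z \ {i}` joined to `i` by odd edges of
`Z`, so the path `O_{{i,j}}` lies in `O_Z = O_X ∆ O_Y`. Toggling that path moves each of its
edges from one of `O_X`, `O_Y` to the other, so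
`|O_{X ∆ {i,j}}| + |O_{Y ∆ {i,j}}| = |O_X| + |O_Y|`.
-/

open Finset

namespace Finset

variable {α : Type*} [DecidableEq α]

theorem card_symmDiff_add_two_mul_card_inter (s t : Finset α) :
    #(s ∆ t) + 2 * #(s ∩ t) = #s + #t := by
  rw [symmDiff_eq_sup_sdiff_inf, sup_eq_union, inf_eq_inter,
    card_sdiff_of_subset inter_subset_union, ← card_union_add_card_inter]
  have := card_le_card (inter_subset_union (s := s) (t := t))
  omega

theorem even_card_symmDiff_iff {s t : Finset α} : Even #(s ∆ t) ↔ (Even #s ↔ Even #t) := by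
  have h := card_symmDiff_add_two_mul_card_inter s t
  rw [← Nat.even_add, ← h]
  simp [Nat.even_add]

theorem even_card_symmDiff {s t : Finset α} (hs : Even #s) (ht : Even #t) : Even #(s ∆ t) :=
  even_card_symmDiff_iff.2 (iff_of_true hs ht)

theorem filter_symmDiff {s t : Finset α} (p : α → Prop) [DecidablePred p] :
    (s ∆ t).filter p = s.filter p ∆ t.filter p := by
  ext a
  simp only [mem_filter, mem_symmDiff]
  tauto

theorem card_symmDiff_add_card_symmDiff_of_subset {s t u : Finset α} (h : u ⊆ s ∆ t) :
    #(s ∆ u) + #(t ∆ u) = #s + #t := by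
  have hs := card_symmDiff_add_two_mul_card_inter s u
  have ht := card_symmDiff_add_two_mul_card_inter t u
  have hu : #(s ∩ u) + #(t ∩ u) = #u := by
    rw [← card_union_of_disjoint]
    · congr 1
      ext a
      have := @h a
      simp only [mem_union, mem_inter, mem_symmDiff] at this ⊢
      tauto
    · rw [disjoint_left]
      intro a has hat
      have := h (mem_inter.1 has).2
      simp only [mem_inter, mem_symmDiff] at has hat this
      tauto
  omega

end Finset

namespace SimpleGraph

variable {V : Type*} {G : SimpleGraph V}

theorem Connected.reachable_deleteEdges_or (hG : G.Connected) {u v : V} (huv : G.Adj u v)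
    (x : V) :
    (G.deleteEdges {s(u, v)}).Reachable u x ∨ (G.deleteEdges {s(u, v)}).Reachable v x := by
  obtain ⟨p, hp⟩ := (hG.preconnected u x).exists_isPath
  cases p with
  | nil => exact .inl .rfl
  | @cons _ w _ huw q =>
    have hq : (G.deleteEdges {s(u, v)}).Reachable w x :=
      reachable_deleteEdges_iff_exists_walk.2
        ⟨q, fun he => ((Walk.cons_isPath_iff huw q).1 hp).2 (q.fst_mem_support_of_mem_edges he)⟩
    by_cases hwv : w = v
    · exact .inr (hwv ▸ hq)
    · refine .inl (Adj.reachable ?_ |>.trans hq)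
      simp [huw, hwv, huv.ne]

theorem IsAcyclic.not_reachable_deleteEdges (hG : G.IsAcyclic) {u v : V} (huv : G.Adj u v) :
    ¬ (G.deleteEdges {s(u, v)}).Reachable u v :=
  isAcyclic_iff_forall_adj_isBridge.1 hG huv

theorem IsTree.reachable_deleteEdges_iff_not (hG : G.IsTree) {u v : V} (huv : G.Adj u v)
    (x : V) :
    (G.deleteEdges {s(u, v)}).Reachable v x ↔ ¬ (G.deleteEdges {s(u, v)}).Reachable u x :=
  ⟨fun hv hu => hG.isAcyclic.not_reachable_deleteEdges huv (hu.trans hv.symm),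
    (hG.connected.reachable_deleteEdges_or huv x).resolve_left⟩

/-- The sides `{x | x reachable from w in G - vw}` of the edges `vw` at `v` partition the
vertices other than `v`: a vertex `x ≠ v` lies on the side of the first edge of the path
from `v` to `x`. -/
theorem IsTree.card_adj_reachable_deleteEdges [Fintype V] [DecidableEq V] [DecidableRel G.Adj]
    (hG : G.IsTree) (v x : V) :
    #{w ∈ G.neighborFinset v | (G.deleteEdges {s(v, w)}).Reachable w x} =
      if x = v then 0 else 1 := by
  split_ifs with hxv
  · subst hxv
    refine card_eq_zero.2 (filter_false_of_mem fun w hw hwx => ?_)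
    exact hG.isAcyclic.not_reachable_deleteEdges ((mem_neighborFinset _ _ _).1 hw) hwx.symm
  obtain ⟨p, hp⟩ := (hG.connected.preconnected v x).exists_isPath
  cases p with
  | nil => exact absurd rfl hxv
  | @cons _ w₀ _ hvw₀ q =>
    have hvq : v ∉ q.support := ((Walk.cons_isPath_iff hvw₀ q).1 hp).2
    refine card_eq_one.2 ⟨w₀, eq_singleton_iff_unique_mem.2 ⟨?_, fun w hw => ?_⟩⟩
    · refine mem_filter.2 ⟨(mem_neighborFinset _ _ _).2 hvw₀, ?_⟩
      exact reachable_deleteEdges_iff_exists_walk.2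
        ⟨q, fun he => hvq (q.fst_mem_support_of_mem_edges he)⟩
    rw [mem_filter, mem_neighborFinset] at hw
    obtain ⟨hvw, hwx⟩ := hw
    have hvx : ¬ (G.deleteEdges {s(v, w)}).Reachable v x := fun h =>
      hG.isAcyclic.not_reachable_deleteEdges hvw (h.trans hwx.symm)
    have hmem : s(v, w) ∈ (Walk.cons hvw₀ q).edges := by
      by_contra h
      exact hvx (reachable_deleteEdges_iff_exists_walk.2 ⟨_, h⟩)
    rw [Walk.edges_cons, List.mem_cons] at hmem
    rcases hmem with h | h
    · exact Sym2.congr_right.1 h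
    · exact absurd (q.fst_mem_support_of_mem_edges h) hvq

theorem IsTree.sum_card_reachable_deleteEdges [Fintype V] [DecidableEq V] [DecidableRel G.Adj]
    (hG : G.IsTree) (v : V) (s : Finset V) :
    ∑ w ∈ G.neighborFinset v, #{x ∈ s | (G.deleteEdges {s(v, w)}).Reachable w x} =
      #(s.erase v) := by
  calc _ = ∑ x ∈ s, #{w ∈ G.neighborFinset v | (G.deleteEdges {s(v, w)}).Reachable w x} :=
        sum_card_bipartiteAbove_eq_sum_card_bipartiteBelow _
    _ = #(s.erase v) := by
      simp only [hG.card_adj_reachable_deleteEdges, sum_ite, sum_const_zero, sum_const,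
        smul_eq_mul, mul_one, zero_add, filter_ne']

theorem exists_ne_reachable_odd_degree [Fintype V] [DecidableRel G.Adj] {v : V}
    (hv : Odd (G.degree v)) : ∃ w, w ≠ v ∧ G.Reachable v w ∧ Odd (G.degree w) := by
  classical
  let s : Set V := {u | G.Reachable v u}
  have hdeg (u : s) : (G.induce s).degree u = G.degree u :=
    degree_induce_of_neighborSet_subset fun w huw => u.2.trans (Adj.reachable huw)
  obtain ⟨w, hwv, hw⟩ :=
    (G.induce s).exists_ne_odd_degree_of_exists_odd_degree ⟨v, .rfl⟩ (by rwa [hdeg])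
  exact ⟨w, fun h => hwv (Subtype.ext h), w.2, by rwa [hdeg] at hw⟩

end SimpleGraph

section OddEdges

variable {N : ℕ} {T : SimpleGraph (Fin N)} {X W : Finset (Fin N)}

theorem oddEdge_mk_iff {u v : Fin N} :
    OddEdge T X s(u, v) ↔ T.Adj u v ∧
      Odd #{x ∈ X | (T.deleteEdges {s(u, v)}).Reachable u x} ∧
      Odd #{x ∈ X | (T.deleteEdges {s(u, v)}).Reachable v x} := by
  simp only [OddEdge, SimpleGraph.mem_edgeSet, Sym2.forall_mem_pair]
  simp only [← Set.ncard_coe_finset, coe_filter]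

theorem SimpleGraph.IsTree.oddEdge_mk_iff_odd_card (hT : T.IsTree) (hX : Even #X) {u v : Fin N}
    (huv : T.Adj u v) :
    OddEdge T X s(u, v) ↔ Odd #{x ∈ X | (T.deleteEdges {s(u, v)}).Reachable v x} := by
  have hsides : #{x ∈ X | (T.deleteEdges {s(u, v)}).Reachable u x} +
      #{x ∈ X | (T.deleteEdges {s(u, v)}).Reachable v x} = #X := by
    simp only [hT.reachable_deleteEdges_iff_not huv]
    exact card_filter_add_card_filter_not _
  have hpar := Nat.even_add.1 (hsides ▸ hX)
  rw [oddEdge_mk_iff, ← Nat.not_even_iff_odd, ← Nat.not_even_iff_odd, hpar]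
  simp [huv]

theorem SimpleGraph.IsTree.oddEdge_symmDiff_iff (hT : T.IsTree) (hX : Even #X) (hW : Even #W)
    (e : Sym2 (Fin N)) :
    OddEdge T (X ∆ W) e ↔ ¬ (OddEdge T X e ↔ OddEdge T W e) := by
  induction e with | h u v => ?_
  by_cases huv : T.Adj u v
  · rw [hT.oddEdge_mk_iff_odd_card (even_card_symmDiff hX hW) huv,
      hT.oddEdge_mk_iff_odd_card hX huv, hT.oddEdge_mk_iff_odd_card hW huv, filter_symmDiff,
      ← Nat.not_even_iff_odd, even_card_symmDiff_iff]
    simp only [← Nat.not_even_iff_odd, not_iff_not]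
  · simp [oddEdge_mk_iff, huv]

noncomputable def oddEdges (T : SimpleGraph (Fin N)) (X : Finset (Fin N)) :
    Finset (Sym2 (Fin N)) :=
  {e | OddEdge T X e}

noncomputable def oddEdgeGraph (T : SimpleGraph (Fin N)) (X : Finset (Fin N)) :
    SimpleGraph (Fin N) :=
  SimpleGraph.fromEdgeSet {e | OddEdge T X e}

theorem oddEdgeGraph_adj {u v : Fin N} : (oddEdgeGraph T X).Adj u v ↔ OddEdge T X s(u, v) := by
  rw [oddEdgeGraph, SimpleGraph.fromEdgeSet_adj]
  exact ⟨And.left, fun h => ⟨h, h.1.ne⟩⟩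

theorem oddDissimilarity_of_even (hX : Even #X) :
    oddDissimilarity T X = ((#(oddEdges T X) : ℤ) : WithBot ℤ) := by
  rw [oddDissimilarity, if_pos hX, oddEdges, ← Set.ncard_coe_finset, coe_filter_univ]

theorem oddDissimilarity_of_not_even (hX : ¬ Even #X) : oddDissimilarity T X = ⊥ :=
  if_neg hX

theorem SimpleGraph.IsTree.oddEdges_symmDiff (hT : T.IsTree) (hX : Even #X) (hW : Even #W) :
    oddEdges T (X ∆ W) = oddEdges T X ∆ oddEdges T W := by
  ext e
  simp only [oddEdges, mem_filter_univ, mem_symmDiff, hT.oddEdge_symmDiff_iff hX hW]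
  tauto

theorem SimpleGraph.IsTree.odd_degree_oddEdgeGraph_iff (hT : T.IsTree) (hX : Even #X)
    (v : Fin N) : Odd ((oddEdgeGraph T X).degree v) ↔ v ∈ X := by
  have hnbr : (oddEdgeGraph T X).neighborFinset v =
      {w ∈ T.neighborFinset v | Odd #{x ∈ X | (T.deleteEdges {s(v, w)}).Reachable w x}} := by
    ext w
    rw [mem_filter, SimpleGraph.mem_neighborFinset, SimpleGraph.mem_neighborFinset,
      oddEdgeGraph_adj]
    exact ⟨fun h => ⟨h.1, (hT.oddEdge_mk_iff_odd_card hX h.1).1 h⟩,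
      fun ⟨hvw, h⟩ => (hT.oddEdge_mk_iff_odd_card hX hvw).2 h⟩
  rw [← SimpleGraph.card_neighborFinset_eq_degree, hnbr, ← odd_sum_iff_odd_card_odd,
    hT.sum_card_reachable_deleteEdges]
  by_cases hv : v ∈ X
  · have hpos := card_pos.2 ⟨v, hv⟩
    rw [card_erase_of_mem hv, Nat.odd_sub hpos]
    simp [hX, hv]
  · rw [erase_eq_of_notMem hv, ← Nat.not_even_iff_odd]
    simp [hX, hv]

theorem OddEdge.not_reachable_of_pair {i j : Fin N} (hij : i ≠ j) {e : Sym2 (Fin N)}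
    (he : OddEdge T {i, j} e) : ¬ (T.deleteEdges {e}).Reachable i j := by
  induction e with | h u v => ?_
  intro hreach
  have hodd := (oddEdge_mk_iff.1 he).2.1
  by_cases hui : (T.deleteEdges {s(u, v)}).Reachable u i
  · rw [filter_true_of_mem, card_pair hij] at hodd
    · exact Nat.not_odd_iff_even.2 even_two hodd
    · simp only [mem_insert, mem_singleton]
      rintro x (rfl | rfl)
      exacts [hui, hui.trans hreach]
  · rw [filter_false_of_mem, card_empty] at hodd
    · exact Nat.not_odd_zero hodd
    · simp only [mem_insert, mem_singleton]
      rintro x (rfl | rfl) hx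
      exacts [hui hx, hui (hx.trans hreach.symm)]

theorem oddEdges_pair_subset {i j : Fin N} (hij : i ≠ j)
    (hreach : (oddEdgeGraph T X).Reachable i j) : oddEdges T {i, j} ⊆ oddEdges T X := by
  intro e he
  simp only [oddEdges, mem_filter_univ] at he ⊢
  by_contra hX
  refine he.not_reachable_of_pair hij (hreach.mono fun a b hab => ?_)
  rw [oddEdgeGraph_adj] at hab
  refine SimpleGraph.deleteEdges_adj.2 ⟨hab.1, ?_⟩
  rintro rfl
  exact hX hab

end OddEdges

/-- **The odd-dissimilarity map is a valuated Δ-matroid**: it satisfies the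
tropical Wick exchange axiom. -/
theorem oddDissimilarity_valuated_delta_matroid (N : ℕ)
    (T : SimpleGraph (Fin N)) (hT : T.IsTree) (X Y : Finset (Fin N)) (i : Fin N)
    (hi : i ∈ X ∆ Y) :
    oddDissimilarity T X + oddDissimilarity T Y ≤
      ((X ∆ Y).erase i).sup fun j =>
        oddDissimilarity T (X ∆ {i, j}) + oddDissimilarity T (Y ∆ {i, j}) := by
  by_cases hX : Even #X
  swap
  · simp [oddDissimilarity_of_not_even hX]
  by_cases hY : Even #Y
  swap
  · simp [oddDissimilarity_of_not_even hY]
  have hZ : Even #(X ∆ Y) := even_card_symmDiff hX hY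
  obtain ⟨j, hji, hreach, hj⟩ :=
    SimpleGraph.exists_ne_reachable_odd_degree ((hT.odd_degree_oddEdgeGraph_iff hZ i).2 hi)
  have hjZ : j ∈ X ∆ Y := (hT.odd_degree_oddEdgeGraph_iff hZ j).1 hj
  have hij : Even #{i, j} := by rw [card_pair hji.symm]; exact even_two
  have hP : oddEdges T {i, j} ⊆ oddEdges T X ∆ oddEdges T Y :=
    hT.oddEdges_symmDiff hX hY ▸ oddEdges_pair_subset hji.symm hreach
  refine le_sup_of_le (mem_erase.2 ⟨hji, hjZ⟩) ?_
  rw [oddDissimilarity_of_even hX, oddDissimilarity_of_even hY,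
    oddDissimilarity_of_even (even_card_symmDiff hX hij),
    oddDissimilarity_of_even (even_card_symmDiff hY hij),
    hT.oddEdges_symmDiff hX hij, hT.oddEdges_symmDiff hY hij]
  exact_mod_cast (card_symmDiff_add_card_symmDiff_of_subset hP).ge
end

section
/- Let T be a tree with vertex set V, let r ∈ V, and let X ⊆ V ∖ {r} be nonempty. For a real number t, let M(t) be the symmetric matrix with entries m_{ij} = t^{d_{ij}} − t^{d_{ri} + d_{rj}} for i,j ∈ X (the Schur complement of the r-th diagonal entry in A(t)[X ∪ {r}]). Then there exists a real number t₀ such that for every real t > t₀, the matrix M(t) is negative definite. -/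
/-!
Root `T` at `r` and call `v` an ancestor of `i` when `T.Between r v i`, i.e. `v` lies on the
geodesic from `r` to `i`. If `c` is the median of `r, i, j`, the common ancestors of `i` and `j`
are the ancestors of `c`, and those other than `r` sit at distances `0, …, d(r,c) - 1` from `c`.
Summing the resulting geometric series gives
  `t^(d(r,i) + d(r,j)) - t^d(i,j) = (t² - 1) ∑ t^d(v,i) t^d(v,j)`,
the sum running over the common ancestors `v ≠ r` of `i` and `j`. Hence `-M(t) = (t² - 1) BᵀB`
where `B v i = t^d(v,i)` for ancestors `v ≠ r` of `i`. The rows of `B` indexed by `X` are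
unitriangular for the depth order, so `B` has trivial kernel and `-M(t)` is positive definite
as soon as `t > 1`.
-/

open scoped Matrix

namespace SimpleGraph

variable {V : Type*} {G : SimpleGraph V}

def Between (G : SimpleGraph V) (u v w : V) : Prop :=
  G.dist u v + G.dist v w = G.dist u w

noncomputable instance {u v w : V} : Decidable (G.Between u v w) :=
  inferInstanceAs (Decidable (_ = _))

theorem between_self_right (u v : V) : G.Between u v v := by
  simp [Between]

theorem Walk.between_of_mem_support {u v w : V} {p : G.Walk u w} (hp : p.length = G.dist u w)
    (hv : v ∈ p.support) : G.Between u v w := by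
  classical
  have h := congrArg Walk.length (p.take_spec hv)
  rw [Walk.length_append] at h
  rw [Between, ← length_eq_dist_of_subwalk hp (p.isSubwalk_takeUntil hv),
    ← length_eq_dist_of_subwalk hp (p.isSubwalk_dropUntil hv), h, hp]

theorem Connected.exists_between_dist_eq (hG : G.Connected) {u w : V} {k : ℕ}
    (hk : k ≤ G.dist u w) : ∃ v, G.Between u v w ∧ G.dist u v = k := by
  obtain ⟨p, hp⟩ := hG.exists_walk_length_eq_dist u w
  refine ⟨p.getVert k, Walk.between_of_mem_support hp (p.getVert_mem_support k), ?_⟩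
  rw [← length_eq_dist_of_subwalk hp (p.isSubwalk_take k), Walk.take_length]
  omega

namespace Between

variable {w x y z : V}

theorem trans_left (hG : G.Connected) (h₁ : G.Between w y z) (h₂ : G.Between w x y) :
    G.Between w x z := by
  have := hG.dist_triangle (u := w) (v := x) (w := z)
  have := hG.dist_triangle (u := x) (v := y) (w := z)
  unfold Between at *
  omega

theorem trans_left_right (hG : G.Connected) (h₁ : G.Between w y z) (h₂ : G.Between w x y) :
    G.Between x y z := by
  have := hG.dist_triangle (u := w) (v := x) (w := z)
  have := hG.dist_triangle (u := x) (v := y) (w := z)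
  unfold Between at *
  omega

end Between

theorem IsAcyclic.length_eq_dist_of_isPath (hG : G.IsAcyclic) {u v : V} {p : G.Walk u v}
    (hp : p.IsPath) : p.length = G.dist u v := by
  obtain ⟨q, hq, hql⟩ := p.reachable.exists_path_of_dist
  have hpq : p = q := congrArg Subtype.val ((hG.subsingleton_path u v).elim ⟨p, hp⟩ ⟨q, hq⟩)
  rw [← hql, hpq]

namespace IsTree

variable (hT : G.IsTree)
include hT

theorem eq_of_between_of_dist_eq {r u v w : V} (hv : G.Between r v u) (hw : G.Between r w u)
    (h : G.dist r v = G.dist r w) : v = w := by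
  obtain ⟨p₁, hp₁⟩ := hT.connected.exists_walk_length_eq_dist r v
  obtain ⟨q₁, hq₁⟩ := hT.connected.exists_walk_length_eq_dist v u
  obtain ⟨p₂, hp₂⟩ := hT.connected.exists_walk_length_eq_dist r w
  obtain ⟨q₂, hq₂⟩ := hT.connected.exists_walk_length_eq_dist w u
  have hpath₁ := (p₁.append q₁).isPath_of_length_eq_dist
    (by rw [Walk.length_append, hp₁, hq₁, hv])
  have hpath₂ := (p₂.append q₂).isPath_of_length_eq_dist
    (by rw [Walk.length_append, hp₂, hq₂, hw])
  have heq : p₁.append q₁ = p₂.append q₂ :=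
    congrArg Subtype.val ((hT.isAcyclic.subsingleton_path r u).elim ⟨_, hpath₁⟩ ⟨_, hpath₂⟩)
  have hv' : (p₁.append q₁).getVert (G.dist r v) = v := by simp [Walk.getVert_append, hp₁]
  have hw' : (p₂.append q₂).getVert (G.dist r w) = w := by simp [Walk.getVert_append, hp₂]
  rw [← hv', ← hw', heq, h]

theorem between_of_isPath_of_forall_dist_le {r c i : V} {s : G.Walk c i} (hs : s.IsPath)
    (hdeep : ∀ u ∈ s.support, G.dist r c ≤ G.dist r u) : G.Between r c i := by
  obtain ⟨p, hp⟩ := hT.connected.exists_walk_length_eq_dist r c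
  have hnodup := hs.support_nodup
  rw [← s.cons_tail_support, List.nodup_cons] at hnodup
  have hps : (p.append s).IsPath := by
    rw [Walk.isPath_def, Walk.support_append, List.nodup_append]
    refine ⟨(p.isPath_of_length_eq_dist hp).support_nodup, hnodup.2, ?_⟩
    rintro u hup _ hus rfl
    have hrc := Walk.between_of_mem_support hp hup
    have hru := hdeep u (List.mem_of_mem_tail hus)
    have huc : u = c := hT.connected.dist_eq_zero_iff.1 (by unfold Between at hrc; omega)
    exact hnodup.1 (huc ▸ hus)
  have hlen := hT.isAcyclic.length_eq_dist_of_isPath hps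
  rw [Walk.length_append, hp] at hlen
  have := dist_le s
  have := hT.connected.dist_triangle (u := r) (v := c) (w := i)
  unfold Between
  omega

theorem exists_median (r i j : V) :
    ∃ c, G.Between r c i ∧ G.Between r c j ∧ G.Between i c j := by
  classical
  obtain ⟨q, hq⟩ := hT.connected.exists_walk_length_eq_dist i j
  obtain ⟨c, hc, hmin⟩ := q.support.toFinset.exists_min_image (G.dist r) ⟨i, by simp⟩
  rw [List.mem_toFinset] at hc
  have hdeep : ∀ u ∈ q.support, G.dist r c ≤ G.dist r u :=
    fun u hu => hmin u (List.mem_toFinset.2 hu)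
  have hqp := q.isPath_of_length_eq_dist hq
  refine ⟨c, ?_, ?_, Walk.between_of_mem_support hq hc⟩
  · refine hT.between_of_isPath_of_forall_dist_le (hqp.takeUntil hc).reverse fun u hu => ?_
    exact hdeep u (q.support_takeUntil_subset_support hc (by simpa using hu))
  · exact hT.between_of_isPath_of_forall_dist_le (hqp.dropUntil hc)
      fun u hu => hdeep u (q.support_dropUntil_subset_support hc hu)

theorem between_and_between_iff_of_median {r i j c v : V} (hri : G.Between r c i)
    (hrj : G.Between r c j) (hij : G.Between i c j) :
    G.Between r v i ∧ G.Between r v j ↔ G.Between r v c := by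
  refine ⟨fun ⟨hvi, hvj⟩ => ?_,
    fun h => ⟨hri.trans_left hT.connected h, hrj.trans_left hT.connected h⟩⟩
  have hle : G.dist r v ≤ G.dist r c := by
    have := hT.connected.dist_triangle (u := i) (v := v) (w := j)
    have := G.dist_comm (u := i) (v := v)
    have := G.dist_comm (u := i) (v := c)
    unfold Between at *
    omega
  obtain ⟨a, hac, ha⟩ := hT.connected.exists_between_dist_eq hle
  rwa [hT.eq_of_between_of_dist_eq hvi (hri.trans_left hT.connected hac) ha.symm]

theorem sum_between_eq_sum_range {M : Type*} [AddCommMonoid M] [Fintype V] [DecidableEq V]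
    (r c : V) (f : ℕ → M) :
    ∑ v with v ≠ r ∧ G.Between r v c, f (G.dist v c) = ∑ k ∈ Finset.range (G.dist r c), f k := by
  refine Finset.sum_nbij (G.dist · c) ?_ ?_ ?_ fun _ _ => rfl
  · simp only [Finset.mem_filter, Finset.mem_univ, true_and, Finset.mem_range]
    rintro v ⟨hvr, hv⟩
    have := hT.connected.dist_eq_zero_iff.not.2 (Ne.symm hvr)
    unfold Between at hv
    omega
  · intro v hv w hw h
    simp only [Finset.coe_filter, Finset.mem_univ, true_and, Set.mem_ofPred_eq] at hv hw
    refine hT.eq_of_between_of_dist_eq hv.2 hw.2 ?_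
    unfold Between at hv hw
    simp only at h
    omega
  · intro k hk
    simp only [Finset.coe_range, Set.mem_Iio] at hk
    obtain ⟨a, hac, ha⟩ := hT.connected.exists_between_dist_eq (u := r) (w := c)
      (Nat.sub_le (G.dist r c) k)
    refine ⟨a, ?_, ?_⟩
    · simp only [Finset.coe_filter, Finset.mem_univ, true_and, Set.mem_ofPred_eq]
      refine ⟨fun h => ?_, hac⟩
      rw [h, dist_self] at ha
      omega
    · unfold Between at hac
      simp only
      omega

end IsTree

noncomputable def ancestorMatrix [DecidableEq V] (G : SimpleGraph V) (r : V) (t : ℝ) :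
    Matrix V V ℝ :=
  Matrix.of fun v i => if v ≠ r ∧ G.Between r v i then t ^ G.dist v i else 0

namespace IsTree

variable [DecidableEq V] (hT : G.IsTree)
include hT

theorem sq_sub_one_mul_ancestorMatrix_gram_apply [Fintype V] (r : V) (t : ℝ) (i j : V) :
    (t ^ 2 - 1) * ((G.ancestorMatrix r t)ᵀ * G.ancestorMatrix r t) i j =
      t ^ (G.dist r i + G.dist r j) - t ^ G.dist i j := by
  obtain ⟨c, hri, hrj, hij⟩ := hT.exists_median r i j
  have hentry : ∀ v, G.ancestorMatrix r t v i * G.ancestorMatrix r t v j =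
      if v ≠ r ∧ G.Between r v c then t ^ G.dist i j * (t ^ 2) ^ G.dist v c else 0 := by
    intro v
    have hcommon := hT.between_and_between_iff_of_median (v := v) hri hrj hij
    simp only [ancestorMatrix, Matrix.of_apply]
    by_cases hv : v ≠ r ∧ G.Between r v c
    · have hvi := hri.trans_left_right hT.connected hv.2
      have hvj := hrj.trans_left_right hT.connected hv.2
      rw [if_pos ⟨hv.1, hcommon.2 hv.2 |>.1⟩, if_pos ⟨hv.1, hcommon.2 hv.2 |>.2⟩, if_pos hv,
        ← pow_mul, ← pow_add, ← pow_add]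
      congr 1
      have := G.dist_comm (u := i) (v := c)
      unfold Between at hvi hvj hij
      omega
    · rw [if_neg hv]
      split_ifs <;> first | rfl | simp_all
  rw [Matrix.mul_apply]
  simp only [Matrix.transpose_apply, hentry]
  rw [← Finset.sum_filter, hT.sum_between_eq_sum_range r c fun k => t ^ G.dist i j * (t ^ 2) ^ k,
    ← Finset.mul_sum, mul_left_comm, mul_comm (t ^ 2 - 1), geom_sum_mul, mul_sub, mul_one,
    ← pow_mul, ← pow_add]
  congr 2
  have := G.dist_comm (u := i) (v := c)
  unfold Between at hri hrj hij
  omega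

theorem ancestorMatrix_submatrix_mulVec_injective {r : V} {X : Finset V} (hr : r ∉ X) (t : ℝ) :
    Function.Injective ((G.ancestorMatrix r t).submatrix id ((↑) : X → V)).mulVec := by
  set B := (G.ancestorMatrix r t).submatrix id ((↑) : X → V)
  refine (injective_iff_map_eq_zero (Matrix.mulVecLin B)).2 fun x hx => ?_
  by_contra hne
  obtain ⟨i₀, hi₀, hdeepest⟩ := (Finset.univ.filter (x · ≠ 0)).exists_max_image
    (fun i : X => G.dist r i) (by simpa [Finset.filter_nonempty_iff] using Function.ne_iff.1 hne)
  have hrow : (B *ᵥ x) i₀ = x i₀ := by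
    rw [Matrix.mulVec, dotProduct, Finset.sum_eq_single i₀]
    · have hi₀r : (i₀ : V) ≠ r := fun h => hr (h ▸ i₀.2)
      simp [B, ancestorMatrix, hi₀r, between_self_right]
    · intro i _ hi
      by_cases hxi : x i = 0
      · rw [hxi, mul_zero]
      · suffices ¬ G.Between r i₀ i by simp [B, ancestorMatrix, this]
        intro hbetween
        have := hdeepest i (by simpa using hxi)
        unfold Between at hbetween
        exact hi (Subtype.ext (hT.connected.dist_eq_zero_iff.1 (by omega))).symm
    · simp
  exact (Finset.mem_filter.1 hi₀).2 (hrow ▸ congrFun hx i₀)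

end IsTree

end SimpleGraph

theorem schur_complement_negDef_general (N : ℕ) (T : SimpleGraph (Fin N)) (hT : T.IsTree)
    (r : Fin N) (X : Finset (Fin N)) (hr : r ∉ X) :
    ∃ t₀ : ℝ, ∀ t : ℝ, t₀ < t →
      (-(Matrix.of fun i j : {x // x ∈ X} =>
          t ^ T.dist i j - t ^ (T.dist r i + T.dist r j))).PosDef := by
  refine ⟨1, fun t ht => ?_⟩
  set B := (T.ancestorMatrix r t).submatrix id ((↑) : X → Fin N)
  have hgram : -(Matrix.of fun i j : {x // x ∈ X} =>
      t ^ T.dist i j - t ^ (T.dist r i + T.dist r j)) = (t ^ 2 - 1) • (Bᴴ * B) := by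
    ext i j
    have hsub : (Bᴴ * B) i j = ((T.ancestorMatrix r t)ᵀ * T.ancestorMatrix r t) i j := by
      simp [B, Matrix.mul_apply]
    rw [Matrix.smul_apply, smul_eq_mul, hsub, hT.sq_sub_one_mul_ancestorMatrix_gram_apply]
    simp
  rw [hgram]
  exact (Matrix.PosDef.conjTranspose_mul_self B
    (hT.ancestorMatrix_submatrix_mulVec_injective hr t)).smul (by nlinarith)

/-- **Negative definiteness of the Schur complement.** For a tree `T`, a root
`r` and nonempty `X ⊆ V ∖ {r}`, the matrix `M(t)` with entries
`t^{d i j} − t^{d r i + d r j}` (the Schur complement of the `r`-th diagonal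
entry of `A(t)[X ∪ {r}]`) is negative definite for all sufficiently large
real `t`, i.e. `−M(t)` is positive definite. -/
theorem schur_complement_negDef (N : ℕ) (T : SimpleGraph (Fin N)) (hT : T.IsTree)
    (r : Fin N) (X : Finset (Fin N)) (hX : X.Nonempty) (hr : r ∉ X) :
    ∃ t₀ : ℝ, ∀ t : ℝ, t₀ < t →
      (-(Matrix.of fun i j : {x // x ∈ X} =>
          t ^ T.dist i j - t ^ (T.dist r i + T.dist r j))).PosDef :=
  schur_complement_negDef_general N T hT r X hr
end

section
/- Let F = (V_F, E_F) be a finite star with center vertex v (i.e., F is a tree in which every edge is incident to v), and suppose F is spanned by X ⊆ V_F. Then ⟨Π_{F,X}⟩ = (−1)^{|X|+1} if v ∈ X, and ⟨Π_{F,X}⟩ = (−1)^{|X|+1} · (deg_F(v) − 1) if v ∉ X. -/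
open scoped Classical

/-- An edge `e` lies on the unique path between `i` and `j` in the graph `G`
iff its removal disconnects `i` from `j`. -/
def EdgeOnPath {V : Type*} (G : SimpleGraph V) (e : Sym2 V) (i j : V) : Prop :=
  ¬ (G.deleteEdges {e}).Reachable i j

/-- `Π_{F,X}` for a graph `F`: permutations `σ` of `X` such that
(a) every orbit of `σ` stays in one connected component of `F`, and
(b) every edge of `F` lies on the path from `i` to `σ i` for exactly two
elements `i ∈ X`. -/
def PiFX {V : Type*} (F : SimpleGraph V) (X : Finset V)
    (σ : Equiv.Perm {x // x ∈ X}) : Prop :=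
  (∀ i : {x // x ∈ X}, F.Reachable i (σ i)) ∧
  ∀ e ∈ F.edgeSet, {i : {x // x ∈ X} | EdgeOnPath F e i (σ i)}.ncard = 2

/-- `⟨Π_{F,X}⟩`, the signed count of the permutations in `Π_{F,X}`. -/
noncomputable def piFXSum {V : Type*} [Fintype V] (F : SimpleGraph V) (X : Finset V) : ℤ :=
  ∑ σ ∈ Finset.univ.filter (fun σ => PiFX F X σ), (Equiv.Perm.sign σ : ℤ)

/-!
Deleting the edge `vl` of a star isolates the leaf `l` and leaves everything else joined to `v`,
so `vl` lies on the path from `i` to `σ i` iff exactly one of `i`, `σ i` is `l`. Hence `vl` is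
used exactly twice (by `l` and `σ⁻¹ l`) when `σ l ≠ l` and never otherwise: `Π_{F,X}` consists
of the permutations of `X` whose fixed points lie in `{v}`.

The signed count of permutations with fixed points in `K` is `det (J - I + diag 1_K)`. For
`K = ∅` this is `det (J - I) = (-1)^(n+1) (n-1)` by the matrix determinant lemma; for `K = {a}`,
subtracting row `a` from every other row turns `J - I + E_aa` into the rank-one perturbation
`e_a (1 + e_a)ᵀ - I` of `-I`, of determinant `(-1)^(n+1)`. When `v ∉ X`, `X` is the set of
leaves, of size `deg v`.
-/

open Finset Matrix Equiv

namespace Matrix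

variable {n R : Type*} [Fintype n] [DecidableEq n] [CommRing R]

theorem det_vecMulVec_sub_one (u w : n → R) :
    det (vecMulVec u w - 1) = (-1) ^ Fintype.card n * (1 - w ⬝ᵥ u) := by
  rw [← neg_sub, det_neg, sub_eq_add_neg, ← neg_vecMulVec, vecMulVec_eq Unit,
    det_one_add_replicateCol_mul_replicateRow, dotProduct_neg, ← sub_eq_add_neg]

end Matrix

section SignedSums

variable {α : Type*} [Fintype α] [DecidableEq α]

theorem sum_sign_fixedPoints_subset_eq_det (K : Finset α) :
    ∑ σ ∈ univ.filter (fun σ : Perm α => ∀ i, σ i = i → i ∈ K), (Perm.sign σ : ℤ) =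
      det (of fun i j => if i = j → j ∈ K then 1 else 0) := by
  rw [det_apply, sum_filter]
  refine sum_congr rfl fun σ _ => ?_
  simp [Fintype.prod_boole, Units.smul_def]

theorem sum_sign_derangements :
    ∑ σ ∈ univ.filter (fun σ : Perm α => ∀ i, σ i ≠ i), (Perm.sign σ : ℤ) =
      (-1) ^ (Fintype.card α + 1) * (Fintype.card α - 1) := by
  have hM : (of fun i j : α => if i = j → j ∈ (∅ : Finset α) then (1 : ℤ) else 0) =
      vecMulVec 1 1 - 1 := by
    ext i j
    by_cases h : i = j <;> simp [one_apply, h]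
  calc _ = det (vecMulVec (1 : α → ℤ) 1 - 1) := by
        rw [← hM, ← sum_sign_fixedPoints_subset_eq_det]
        simp
    _ = _ := by
        rw [det_vecMulVec_sub_one, one_dotProduct_one]
        ring

theorem sum_sign_fixedPoints_subset_singleton (a : α) :
    ∑ σ ∈ univ.filter (fun σ : Perm α => ∀ i, σ i = i → i = a), (Perm.sign σ : ℤ) =
      (-1) ^ (Fintype.card α + 1) := by
  have hM : det (of fun i j : α => if i = j → j ∈ ({a} : Finset α) then (1 : ℤ) else 0) =
      det (vecMulVec (Pi.single a 1) (1 + Pi.single a 1) - 1) := by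
    refine det_eq_of_forall_row_eq_smul_add_const (1 - Pi.single a 1) a (by simp) fun i j => ?_
    simp only [of_apply, Matrix.sub_apply, vecMulVec_apply, one_apply, Pi.single_apply, Pi.add_apply,
      Pi.one_apply, Pi.sub_apply, mem_singleton]
    split_ifs <;> grind
  rw [← sum_sign_fixedPoints_subset_eq_det] at hM
  simp only [mem_singleton] at hM
  rw [hM, det_vecMulVec_sub_one, dotProduct_single, Pi.add_apply, Pi.one_apply, Pi.single_eq_same]
  ring

end SignedSums

theorem Equiv.Perm.ncard_setOf_not_iff_eq_two_iff {α : Type*} (σ : Perm α) (a : α) :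
    {j | ¬(j = a ↔ σ j = a)}.ncard = 2 ↔ σ a ≠ a := by
  by_cases h : σ a = a
  · have hempty : {j | ¬(j = a ↔ σ j = a)} = ∅ := by
      ext j
      simp only [Set.mem_ofPred_eq, Set.mem_empty_iff_false, iff_false, not_not]
      exact ⟨fun hj => hj ▸ h, fun hj => σ.injective (hj.trans h.symm)⟩
    simp [hempty, h]
  · have hinv : σ⁻¹ a ≠ a := fun hc => h (Perm.inv_eq_iff_eq.mp hc).symm
    have hpair : {j | ¬(j = a ↔ σ j = a)} = {a, σ⁻¹ a} := by
      ext j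
      simp only [Set.mem_ofPred_eq, Set.mem_insert_iff, Set.mem_singleton_iff,
        Perm.eq_inv_iff_eq]
      by_cases hja : j = a
      · simp [hja, h]
      · simp [hja]
    rw [hpair, Set.ncard_pair hinv.symm]
    exact iff_of_true rfl h

namespace SimpleGraph

variable {V : Type*} {F : SimpleGraph V} {v : V}

theorem adj_center_of_ne (hconn : F.Preconnected)
    (hstar : ∀ a b : V, F.Adj a b → a = v ∨ b = v) {u : V} (hu : u ≠ v) : F.Adj u v := by
  obtain ⟨p⟩ := hconn u v
  cases p with
  | nil => exact absurd rfl hu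
  | cons h _ => exact (hstar _ _ h).resolve_left hu ▸ h

theorem neighborSet_eq_singleton_center (hconn : F.Preconnected)
    (hstar : ∀ a b : V, F.Adj a b → a = v ∨ b = v) {u : V} (hu : u ≠ v) :
    F.neighborSet u = {v} := by
  ext w
  exact ⟨fun h => (hstar u w h).resolve_left hu, fun h => h ▸ adj_center_of_ne hconn hstar hu⟩

theorem neighborSet_center (hconn : F.Preconnected)
    (hstar : ∀ a b : V, F.Adj a b → a = v ∨ b = v) : F.neighborSet v = {v}ᶜ := by
  ext u
  exact ⟨fun h => h.ne', fun h => (adj_center_of_ne hconn hstar h).symm⟩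

theorem exists_adj_center_of_mem_edgeSet (hstar : ∀ a b : V, F.Adj a b → a = v ∨ b = v)
    {e : Sym2 V} (he : e ∈ F.edgeSet) : ∃ l, F.Adj v l ∧ e = s(v, l) := by
  induction e with
  | _ a b =>
    rcases hstar a b he with rfl | rfl
    · exact ⟨b, he, rfl⟩
    · exact ⟨a, he.symm, Sym2.eq_swap⟩

theorem reachable_deleteEdges_center_iff (hconn : F.Preconnected)
    (hstar : ∀ a b : V, F.Adj a b → a = v ∨ b = v) {l : V} (hl : F.Adj v l) (a b : V) :
    (F.deleteEdges {s(v, l)}).Reachable a b ↔ (a = l ↔ b = l) := by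
  have to_center : ∀ i ≠ l, (F.deleteEdges {s(v, l)}).Reachable i v := by
    intro i hil
    rcases eq_or_ne i v with rfl | hiv
    · rfl
    · refine (deleteEdges_adj.mpr ⟨adj_center_of_ne hconn hstar hiv, ?_⟩).reachable
      simp [hiv, hil]
  have from_leaf : ∀ j, (F.deleteEdges {s(v, l)}).Reachable l j → j = l := by
    rintro j ⟨_ | ⟨h, _⟩⟩
    · rfl
    · obtain ⟨hadj, hne⟩ := deleteEdges_adj.mp h
      obtain rfl := (hstar _ _ hadj).resolve_left hl.ne'
      exact absurd Sym2.eq_swap hne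
  constructor
  · intro h
    exact ⟨fun ha => (from_leaf b (ha ▸ h)), fun hb => from_leaf a (hb ▸ h.symm)⟩
  · intro h
    by_cases ha : a = l
    · rw [ha, h.mp ha]
    · exact (to_center a ha).trans (to_center b (mt h.mpr ha)).symm

end SimpleGraph

open SimpleGraph

theorem piFX_iff_of_star {V : Type*} {F : SimpleGraph V} {v : V} (hconn : F.Preconnected)
    (hstar : ∀ a b : V, F.Adj a b → a = v ∨ b = v) {X : Finset V}
    (hX : ∀ u : V, (F.neighborSet u).ncard ≤ 1 → u ∈ X) (σ : Perm {x // x ∈ X}) :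
    PiFX F X σ ↔ ∀ i, σ i = i → (i : V) = v := by
  have hedge : ∀ l (hl : F.Adj v l) (hlX : l ∈ X),
      {i : {x // x ∈ X} | EdgeOnPath F s(v, l) i (σ i)}.ncard = 2 ↔ σ ⟨l, hlX⟩ ≠ ⟨l, hlX⟩ := by
    intro l hl hlX
    simp only [EdgeOnPath, reachable_deleteEdges_center_iff hconn hstar hl]
    convert σ.ncard_setOf_not_iff_eq_two_iff ⟨l, hlX⟩ using 5
    simp [Subtype.ext_iff]
  constructor
  · rintro ⟨-, hcount⟩ i hi
    by_contra hiv
    have hl : F.Adj v i := (adj_center_of_ne hconn hstar hiv).symm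
    exact (hedge i hl i.2).mp (hcount s(v, i) hl) hi
  · refine fun h => ⟨fun _ => hconn _ _, fun e he => ?_⟩
    obtain ⟨l, hl, rfl⟩ := exists_adj_center_of_mem_edgeSet hstar he
    have hlX : l ∈ X := hX l (by simp [neighborSet_eq_singleton_center hconn hstar hl.ne'])
    exact (hedge l hl hlX).mpr fun hfix => hl.ne (h _ hfix).symm

/-- **The star case**: if `F` is a finite star with center `v` (a tree all of
whose edges are incident to `v`) spanned by `X`, then
`⟨Π_{F,X}⟩ = (−1)^{|X|+1}` if `v ∈ X`, and
`⟨Π_{F,X}⟩ = (−1)^{|X|+1} (deg_F v − 1)` if `v ∉ X`. -/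
theorem piFXSum_star (V : Type*) [Fintype V] (F : SimpleGraph V) (hF : F.IsTree)
    (v : V) (hstar : ∀ a b : V, F.Adj a b → a = v ∨ b = v)
    (X : Finset V) (hX : ∀ u : V, (F.neighborSet u).ncard ≤ 1 → u ∈ X) :
    (v ∈ X → piFXSum F X = (-1 : ℤ) ^ (X.card + 1)) ∧
    (v ∉ X → piFXSum F X =
      (-1 : ℤ) ^ (X.card + 1) * (((F.neighborSet v).ncard : ℤ) - 1)) := by
  have hconn := hF.connected.preconnected
  have hsum : piFXSum F X =
      ∑ σ ∈ univ.filter (fun σ : Perm X => ∀ i, σ i = i → (i : V) = v), (Perm.sign σ : ℤ) :=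
    sum_congr (filter_congr fun σ _ => piFX_iff_of_star hconn hstar hX σ) fun _ _ => rfl
  refine ⟨fun hv => ?_, fun hv => ?_⟩
  · rw [hsum, ← Fintype.card_coe X, ← sum_sign_fixedPoints_subset_singleton ⟨v, hv⟩]
    simp only [Subtype.ext_iff]
  · have hXv : (X : Set V) = {v}ᶜ := by
      ext u
      refine ⟨fun hu huv => hv (huv ▸ hu), fun hu => hX u ?_⟩
      simp [neighborSet_eq_singleton_center hconn hstar hu]
    rw [hsum, neighborSet_center hconn hstar, ← hXv, Set.ncard_coe_finset, ← Fintype.card_coe X,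
      ← sum_sign_derangements]
    have hne : ∀ i : X, (i : V) ≠ v := fun i h => hv (h ▸ i.2)
    simp only [hne, imp_false]
end

section
/- Let T be a tree with vertex set V = {1,2,…,N}. If X ⊆ V is nicely-ordered with respect to T, then every subset Y ⊆ X is nicely-ordered with respect to T. -/
open scoped Classical

/-- `X = {i₁ < i₂ < ⋯ < i_k}` is nicely ordered w.r.t. `T` if the cyclic tour
`i₁ → i₂ → ⋯ → i_k → i₁` passes through each edge of `T` at most twice. -/
def NicelyOrdered {N : ℕ} (T : SimpleGraph (Fin N)) (X : Finset (Fin N)) : Prop :=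
  ∀ e ∈ T.edgeSet,
    {m : Fin X.card |
      EdgeOnPath T e (X.orderIsoOfFin rfl m) (X.orderIsoOfFin rfl (finRotate X.card m))}.ncard ≤ 2

/-!
Deleting an edge `ab` of a tree splits the vertices into the side of `a` and the side of `b`, and
the edge lies on the path between two vertices iff they lie on different sides. Hence the number of
steps of the tour of `X` that cross `ab` is the number of cyclic changes in the sequence of sides of
`x₁ < ⋯ < x_k`. That number is even, so it is at most `2` iff the sides do not alternate along four
increasing vertices of `X`, and such an alternation in `Y ⊆ X` is one in `X`.
-/

section Alternation

variable {α β : Type*}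

def AlternatesOn [LT α] (c : α → Bool) (s : Set α) : Prop :=
  ∃ x₁ ∈ s, ∃ x₂ ∈ s, ∃ x₃ ∈ s, ∃ x₄ ∈ s,
    x₁ < x₂ ∧ x₂ < x₃ ∧ x₃ < x₄ ∧ c x₁ ≠ c x₂ ∧ c x₂ ≠ c x₃ ∧ c x₃ ≠ c x₄

lemma AlternatesOn.mono [LT α] {c : α → Bool} {s t : Set α} (h : AlternatesOn c s)
    (hst : s ⊆ t) : AlternatesOn c t := by
  obtain ⟨x₁, h₁, x₂, h₂, x₃, h₃, x₄, h₄, hx⟩ := h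
  exact ⟨x₁, hst h₁, x₂, hst h₂, x₃, hst h₃, x₄, hst h₄, hx⟩

lemma alternatesOn_comp_univ_iff [LinearOrder α] [Preorder β] {e : α → β} (he : StrictMono e)
    (c : β → Bool) : AlternatesOn (c ∘ e) Set.univ ↔ AlternatesOn c (Set.range e) := by
  constructor
  · rintro ⟨x₁, -, x₂, -, x₃, -, x₄, -, h₁₂, h₂₃, h₃₄, hc⟩
    exact ⟨e x₁, ⟨x₁, rfl⟩, e x₂, ⟨x₂, rfl⟩, e x₃, ⟨x₃, rfl⟩, e x₄, ⟨x₄, rfl⟩,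
      he h₁₂, he h₂₃, he h₃₄, hc⟩
  · rintro ⟨-, ⟨x₁, rfl⟩, -, ⟨x₂, rfl⟩, -, ⟨x₃, rfl⟩, -, ⟨x₄, rfl⟩, h₁₂, h₂₃, h₃₄, hc⟩
    exact ⟨x₁, trivial, x₂, trivial, x₃, trivial, x₄, trivial,
      he.lt_iff_lt.1 h₁₂, he.lt_iff_lt.1 h₂₃, he.lt_iff_lt.1 h₃₄, hc⟩

end Alternation

lemma Finset.exists_lt_lt_of_two_lt_card {α : Type*} [LinearOrder α] {s : Finset α}
    (h : 2 < s.card) :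
    ∃ q₁ ∈ s, ∃ q₂ ∈ s, ∃ q₃ ∈ s, q₁ < q₂ ∧ q₂ < q₃ := by
  let e := s.orderEmbOfFin rfl
  exact ⟨e ⟨0, by omega⟩, s.orderEmbOfFin_mem rfl _, e ⟨1, by omega⟩, s.orderEmbOfFin_mem rfl _,
    e ⟨2, by omega⟩, s.orderEmbOfFin_mem rfl _, e.strictMono (by simp), e.strictMono (by simp)⟩

section CyclicChanges

open Finset

lemma even_card_filter_ne_comp_perm {ι : Type*} [Fintype ι] (f : ι → Bool) (σ : Equiv.Perm ι) :
    Even #{m | f m ≠ f (σ m)} := by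
  rw [even_iff_two_dvd, ← ZMod.natCast_eq_zero_iff, card_filter]
  push_cast
  have hsplit : ∀ m, (if f m ≠ f (σ m) then (1 : ZMod 2) else 0) =
      (if f m then 1 else 0) + (if f (σ m) then 1 else 0) := by
    intro m
    cases f m <;> cases f (σ m) <;> decide
  rw [sum_congr rfl fun m _ => hsplit m, sum_add_distrib,
    Equiv.sum_comp σ fun m => if f m then (1 : ZMod 2) else 0]
  exact CharTwo.add_self_eq_zero _

lemma val_finRotate_of_lt {k : ℕ} {m : Fin k} (h : m.val + 1 < k) :
    (finRotate k m).val = m.val + 1 := by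
  have : NeZero k := ⟨by omega⟩
  rw [finRotate_apply, Fin.val_add, Fin.val_one', Nat.add_mod_mod, Nat.mod_eq_of_lt h]

variable {k : ℕ} (f : Fin k → Bool)

def cyclicChanges : Finset (Fin k) := {m | f m ≠ f (finRotate k m)}

lemma exists_mem_cyclicChanges_of_ne {i j : Fin k} (hij : i < j) (h : f i ≠ f j) :
    ∃ p ∈ cyclicChanges f, i ≤ p ∧ p < j := by
  by_contra! hnone
  have hconst : ∀ n (hin : i.val ≤ n) (hnj : n ≤ j.val), f ⟨n, by omega⟩ = f i := by
    refine Nat.le_induction (fun _ => rfl) fun n hin ih hnj => ?_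
    have hp : (⟨n, by omega⟩ : Fin k) ∉ cyclicChanges f :=
      fun hp => absurd (hnone _ hp hin) (by simp only [Fin.le_def]; omega)
    have hrot : finRotate k ⟨n, by omega⟩ = ⟨n + 1, by omega⟩ :=
      Fin.ext (val_finRotate_of_lt (by simp only; omega))
    simp only [cyclicChanges, mem_filter, mem_univ, true_and, not_not, hrot] at hp
    rw [← hp, ih (by omega)]
  exact h (hconst j.val hij.le le_rfl).symm

lemma two_lt_card_cyclicChanges_of_alternatesOn (h : AlternatesOn f Set.univ) :
    2 < #(cyclicChanges f) := by
  obtain ⟨i₁, -, i₂, -, i₃, -, i₄, -, h₁₂, h₂₃, h₃₄, hf₁₂, hf₂₃, hf₃₄⟩ := h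
  obtain ⟨p₁, hp₁, hi₁, hp₁i₂⟩ := exists_mem_cyclicChanges_of_ne f h₁₂ hf₁₂
  obtain ⟨p₂, hp₂, hi₂, hp₂i₃⟩ := exists_mem_cyclicChanges_of_ne f h₂₃ hf₂₃
  obtain ⟨p₃, hp₃, hi₃, -⟩ := exists_mem_cyclicChanges_of_ne f h₃₄ hf₃₄
  exact two_lt_card.2 ⟨p₁, hp₁, p₂, hp₂, p₃, hp₃, by omega, by omega, by omega⟩

lemma alternatesOn_of_two_lt_card_cyclicChanges (h : 2 < #(cyclicChanges f)) :
    AlternatesOn f Set.univ := by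
  -- parity upgrades `2 <` to `3 <`, leaving three changes after discarding the wrap-around one
  have h4 : 3 < #(cyclicChanges f) := by
    obtain ⟨t, ht⟩ := even_card_filter_ne_comp_perm f (finRotate k)
    change #(cyclicChanges f) = t + t at ht
    omega
  have hk : 0 < k := (card_pos.1 (by omega : 0 < #(cyclicChanges f))).elim fun m _ => m.pos
  have h3 : 2 < #((cyclicChanges f).erase ⟨k - 1, by omega⟩) := by
    have := pred_card_le_card_erase (s := cyclicChanges f) (a := ⟨k - 1, by omega⟩)
    omega
  obtain ⟨q₁, hq₁, q₂, hq₂, q₃, hq₃, h₁₂, h₂₃⟩ := Finset.exists_lt_lt_of_two_lt_card h3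
  have hlin : ∀ q ∈ (cyclicChanges f).erase ⟨k - 1, by omega⟩,
      (finRotate k q).val = q.val + 1 ∧ f q ≠ f (finRotate k q) := by
    intro q hq
    obtain ⟨hne, hq⟩ := mem_erase.1 hq
    refine ⟨val_finRotate_of_lt ?_, (mem_filter.1 hq).2⟩
    have : q.val ≠ k - 1 := fun h => hne (Fin.ext h)
    omega
  have pick : ∀ q ∈ (cyclicChanges f).erase ⟨k - 1, by omega⟩, ∀ b : Bool,
      ∃ x, q ≤ x ∧ x.val ≤ q.val + 1 ∧ f x ≠ b := by
    intro q hq b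
    obtain ⟨hrot, hchange⟩ := hlin q hq
    by_cases hb : f q = b
    · exact ⟨finRotate k q, by omega, by omega, hb ▸ hchange.symm⟩
    · exact ⟨q, le_rfl, by omega, hb⟩
  obtain ⟨hrot₁, hchange₁⟩ := hlin q₁ hq₁
  obtain ⟨x₃, hx₃, hx₃', hf₂₃⟩ := pick q₂ hq₂ (f (finRotate k q₁))
  obtain ⟨x₄, hx₄, -, hf₃₄⟩ := pick q₃ hq₃ (f x₃)
  refine ⟨q₁, trivial, finRotate k q₁, trivial, x₃, trivial, x₄, trivial, by omega, ?_, ?_,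
    hchange₁, hf₂₃.symm, hf₃₄.symm⟩
  · exact lt_of_le_of_ne (by omega) fun h => hf₂₃ (h ▸ rfl)
  · exact lt_of_le_of_ne (by omega) fun h => hf₃₄ (h ▸ rfl)

lemma two_lt_card_cyclicChanges_iff :
    2 < #(cyclicChanges f) ↔ AlternatesOn f Set.univ :=
  ⟨alternatesOn_of_two_lt_card_cyclicChanges f, two_lt_card_cyclicChanges_of_alternatesOn f⟩

lemma two_lt_card_cyclicChanges_orderEmbOfFin_iff {α : Type*} [LinearOrder α] (c : α → Bool)
    (s : Finset α) :
    2 < #(cyclicChanges fun m => c (s.orderEmbOfFin rfl m)) ↔ AlternatesOn c s := by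
  rw [two_lt_card_cyclicChanges_iff, ← s.range_orderEmbOfFin rfl]
  exact alternatesOn_comp_univ_iff (s.orderEmbOfFin rfl).strictMono c

end CyclicChanges

section EdgeSides

variable {V : Type*} {G : SimpleGraph V}

lemma SimpleGraph.Preconnected.reachable_deleteEdges_left_or_right (hG : G.Preconnected)
    (a b v : V) :
    (G.deleteEdges {s(a, b)}).Reachable v a ∨ (G.deleteEdges {s(a, b)}).Reachable v b := by
  suffices ∀ x (w : G.Walk v x), x = a ∨ x = b →
      (G.deleteEdges {s(a, b)}).Reachable v a ∨ (G.deleteEdges {s(a, b)}).Reachable v b from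
    this a (hG v a).some (Or.inl rfl)
  intro x w hx
  induction w with
  | nil => rcases hx with rfl | rfl <;> simp
  | @cons v u x hvu p ih =>
    by_cases he : s(v, u) = s(a, b)
    · rcases Sym2.eq_iff.1 he with ⟨rfl, -⟩ | ⟨rfl, -⟩ <;> simp
    · have hvu' : (G.deleteEdges {s(a, b)}).Adj v u := by simp [hvu, he]
      exact (ih hx).imp hvu'.reachable.trans hvu'.reachable.trans

lemma SimpleGraph.Preconnected.edgeOnPath_iff (hG : G.Preconnected) (a b i j : V) :
    EdgeOnPath G s(a, b) i j ↔
      ¬((G.deleteEdges {s(a, b)}).Reachable i a ↔ (G.deleteEdges {s(a, b)}).Reachable j a) := by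
  unfold EdgeOnPath
  refine not_congr ⟨fun hij => ⟨hij.symm.trans, hij.trans⟩, fun hiff => ?_⟩
  by_cases hia : (G.deleteEdges {s(a, b)}).Reachable i a
  · exact hia.trans (hiff.1 hia).symm
  · have hib := (hG.reachable_deleteEdges_left_or_right a b i).resolve_left hia
    have hjb := (hG.reachable_deleteEdges_left_or_right a b j).resolve_left (hia ∘ hiff.2)
    exact hib.trans hjb.symm

lemma SimpleGraph.Preconnected.ncard_edgeOnPath_le_two_iff [LinearOrder V] (hG : G.Preconnected)
    (a b : V) (X : Finset V) :
    {m : Fin X.card | EdgeOnPath G s(a, b) (X.orderIsoOfFin rfl m)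
      (X.orderIsoOfFin rfl (finRotate X.card m))}.ncard ≤ 2 ↔
      ¬AlternatesOn (fun v => decide ((G.deleteEdges {s(a, b)}).Reachable v a)) X := by
  have hset : {m : Fin X.card | EdgeOnPath G s(a, b) (X.orderIsoOfFin rfl m)
      (X.orderIsoOfFin rfl (finRotate X.card m))} =
      ↑(cyclicChanges fun m =>
        decide ((G.deleteEdges {s(a, b)}).Reachable (X.orderEmbOfFin rfl m) a)) := by
    ext m
    simp [cyclicChanges, hG.edgeOnPath_iff]
  rw [hset, Set.ncard_coe_finset, ← two_lt_card_cyclicChanges_orderEmbOfFin_iff, not_lt]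

end EdgeSides

/-- **Heredity of nice orderings**: every subset of a nicely-ordered vertex set
of a tree is nicely ordered. -/
theorem nicelyOrdered_subset (N : ℕ) (T : SimpleGraph (Fin N)) (hT : T.IsTree)
    (X : Finset (Fin N)) (hX : NicelyOrdered T X) (Y : Finset (Fin N)) (hYX : Y ⊆ X) :
    NicelyOrdered T Y := by
  have hT' := hT.connected.preconnected
  intro e he
  induction e using Sym2.ind with
  | h a b =>
    rw [hT'.ncard_edgeOnPath_le_two_iff]
    exact fun hY => (hT'.ncard_edgeOnPath_le_two_iff a b X).1 (hX _ he) (hY.mono hYX)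
end

section
/- Let T be a tree with vertex set V = {1,2,…,N} and let X = {i_1, i_2, …, i_{2n}} ⊆ V with i_1 < i_2 < ⋯ < i_{2n} and n ≥ 1 be nicely-ordered with respect to T. Then there exists a partition of the index set {1,…,2n} into n pairs {p_1,q_1}, …, {p_n,q_n} such that (i) p_k + q_k is odd for every k = 1,…,n, and (ii) the edge sets P_{i_{p_1} i_{q_1}}, …, P_{i_{p_n} i_{q_n}} are pairwise disjoint and their union equals O_X. -/
open scoped Classical

/-!
Fix a base vertex `v₀` and colour the position `p` of `i_p` in the cyclic order `i₁, …, i_{2n}`,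
for every edge `e`, by whether `i_p` lies on the side of `e` containing `v₀`. The path between
`i_p` and `i_q` uses `e` exactly when `p` and `q` get different colours; nice ordering says that
each colouring changes at most twice around the cycle, and tree cuts are laminar, so no two
colourings cross.

A pairing of the positions splits a colouring in as many pairs as its colour class has elements,
modulo 2. So it suffices to find a pairing into pairs of opposite parity splitting every colouring
at most once: an edge then lies on the path of exactly one pair if it is odd, and on none otherwise.
Such a pairing is built by induction.
A minimal nonempty even colour class contains two cyclically consecutive positions `m, m + 1`, and
by laminarity and minimality only odd colourings change between them. Pair `m` with `m + 1`,
delete them and recurse: an odd colouring separating `m` from `m + 1` becomes even, so it splits no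
later pair.
-/

open Finset

theorem odd_card_filter_eq_iff {α : Type*} {s : Finset α} (hs : Even #s)
    (c : α → Bool) (a b : Bool) : Odd #{x ∈ s | c x = a} ↔ Odd #{x ∈ s | c x = b} := by
  have key : #{x ∈ s | c x = true} + #{x ∈ s | c x = false} = #s := by
    simpa using card_filter_add_card_filter_not (s := s) (fun x => c x = true)
  rw [← key, Nat.even_add] at hs
  cases a <;> cases b <;> simp only [← Nat.not_even_iff_odd] <;> tauto

theorem finRotate_castSucc {m : ℕ} (i : Fin m) : finRotate (m + 1) i.castSucc = i.succ := by
  ext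
  rw [coe_finRotate_of_ne_last (Fin.castSucc_lt_last i).ne]
  simp

theorem finRotate_natAdd_zero (k : ℕ) :
    finRotate (k + 2) (Fin.natAdd k 0) = Fin.natAdd k 1 := by
  ext
  rw [coe_finRotate_of_ne_last (by simp [Fin.ext_iff])]
  simp

def cyclicCuts {k : ℕ} (c : Fin k → Bool) : ℕ := #{p | c p ≠ c (finRotate k p)}

theorem cyclicCuts_add_two_mul_card {k : ℕ} (c : Fin k → Bool) (a : Bool) :
    cyclicCuts c + 2 * #{p | c p = a ∧ c (finRotate k p) = a} = 2 * #{p | c p = a} := by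
  have key : ∀ x y : Bool, (if x ≠ y then 1 else 0) + 2 * (if x = a ∧ y = a then 1 else 0)
      = (if x = a then 1 else 0) + (if y = a then 1 else 0) := by
    intro x y; cases a <;> cases x <;> cases y <;> rfl
  calc _ = #{p | c p = a} + #{p | c (finRotate k p) = a} := by
        simp only [cyclicCuts, card_filter, mul_sum, ← sum_add_distrib, key]
    _ = _ := by
        rw [card_equiv (finRotate k) (s := {p | c (finRotate k p) = a}) (t := {p | c p = a})
          (by simp), two_mul]

theorem exists_adjacent_of_cyclicCuts_le_two {k : ℕ} {c : Fin k → Bool} (hc : cyclicCuts c ≤ 2)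
    {a : Bool} (ha : 2 ≤ #{p | c p = a}) : ∃ m, c m = a ∧ c (finRotate k m) = a := by
  have := cyclicCuts_add_two_mul_card c a
  obtain ⟨m, hm⟩ : ({p | c p = a ∧ c (finRotate k p) = a} : Finset _).Nonempty := by
    rw [← card_pos]; omega
  exact ⟨m, by simpa using hm⟩

theorem cyclicCuts_comp_addRight {k : ℕ} [NeZero k] (c : Fin k → Bool) (r : Fin k) :
    cyclicCuts (fun p => c (p + r)) = cyclicCuts c :=
  card_equiv (Equiv.addRight r) (by simp [add_right_comm])

theorem cyclicCuts_comp_castSucc_le {k : ℕ} (c : Fin (k + 1) → Bool) :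
    cyclicCuts (c ∘ Fin.castSucc) ≤ cyclicCuts c := by
  rcases k with _ | k
  · simp [cyclicCuts]
  simp only [cyclicCuts, card_filter, Fin.sum_univ_castSucc, Function.comp_apply,
    finRotate_castSucc, finRotate_last, Fin.succ_castSucc, Fin.castSucc_zero, Fin.succ_last,
    Nat.succ_eq_add_one]
  have key : ∀ x y z : Bool, (if x ≠ z then 1 else 0) ≤
      (if x ≠ y then 1 else 0) + (if y ≠ z then 1 else 0) := by decide
  have := key (c (Fin.last k).castSucc) (c (Fin.last (k + 1))) (c 0)
  omega

theorem cyclicCuts_comp_castAdd_two_le {k : ℕ} (c : Fin (k + 2) → Bool) :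
    cyclicCuts (c ∘ Fin.castAdd 2) ≤ cyclicCuts c :=
  (cyclicCuts_comp_castSucc_le (c ∘ Fin.castSucc)).trans (cyclicCuts_comp_castSucc_le c)

def NonCrossing {α : Type*} (c d : α → Bool) : Prop := ∃ a b : Bool, ∀ x, c x = a → d x = b

theorem NonCrossing.comp {α β : Type*} {c d : α → Bool} (h : NonCrossing c d) (f : β → α) :
    NonCrossing (c ∘ f) (d ∘ f) :=
  let ⟨a, b, hab⟩ := h; ⟨a, b, fun x => hab (f x)⟩

theorem exists_forall_cut_at_odd {ι : Type*} {k : ℕ} (hk : Even k) (hk0 : k ≠ 0)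
    (c : ι → Fin k → Bool) (hcuts : ∀ i, cyclicCuts (c i) ≤ 2)
    (hnc : ∀ i j, NonCrossing (c i) (c j)) :
    ∃ m, ∀ i, c i m ≠ c i (finRotate k m) → Odd #{p | c i p = true} := by
  have hpar : ∀ i a b, Odd #{p | c i p = a} ↔ Odd #{p | c i p = b} := fun i =>
    odd_card_filter_eq_iff (s := univ) (by simpa using hk) (c i)
  let size : ι × Bool → ℕ := fun x => #{p | c x.1 p = x.2}
  by_cases heven : ∃ x : ι × Bool, Even (size x) ∧ ∃ p, c x.1 p = x.2
  · obtain ⟨⟨i₁, a₁⟩, ⟨heven₁, p, hp⟩, hmin⟩ := (measure size).wf.has_min _ heven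
    have hpos : 0 < size (i₁, a₁) := card_pos.2 ⟨p, by simpa using hp⟩
    obtain ⟨m, hm, hm'⟩ := exists_adjacent_of_cyclicCuts_le_two (hcuts i₁)
      (a := a₁) (by obtain ⟨r, hr⟩ := heven₁; simp only [size] at hr hpos; omega)
    refine ⟨m, fun i hi => ?_⟩
    by_contra hodd
    -- the colour class of `c i` inside a colour class of `c i₁` would be a smaller even one
    obtain ⟨a, b, hab⟩ := hnc i i₁
    obtain ⟨x, y, hx, hy, hx₁, hy₁⟩ :
        ∃ x y, c i x = a ∧ c i y ≠ a ∧ c i₁ x = a₁ ∧ c i₁ y = a₁ := by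
      by_cases h : c i m = a
      · exact ⟨m, finRotate k m, h, h ▸ hi.symm, hm, hm'⟩
      · refine ⟨finRotate k m, m, ?_, h, hm', hm⟩
        revert h hi; cases c i m <;> cases c i (finRotate k m) <;> cases a <;> simp
    refine hmin (i, a) ⟨?_, x, hx⟩ (card_lt_card ?_)
    · exact Nat.not_odd_iff_even.1 ((hpar i a true).not.2 hodd)
    · refine (ssubset_iff_of_subset fun p hp => ?_).2 ⟨y, by simpa using hy₁, by simpa using hy⟩
      simp only [mem_filter, mem_univ, true_and] at hp ⊢
      exact (hab p hp).trans ((hab x hx).symm.trans hx₁)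
  · push Not at heven
    have : NeZero k := ⟨hk0⟩
    refine ⟨0, fun i _ => ?_⟩
    rw [hpar i true (c i 0), ← Nat.not_even_iff_odd]
    exact fun he => heven (i, c i 0) he 0 rfl

def splitPairs {ι α : Type*} [Fintype ι] (c : α → Bool) (σ : ι × Bool ≃ α) : Finset ι :=
  {κ | c (σ (κ, false)) ≠ c (σ (κ, true))}

theorem card_filter_eq_card_splitPairs_add {ι α : Type*} [Fintype ι] [Fintype α] (c : α → Bool)
    (σ : ι × Bool ≃ α) :
    #{x | c x = true} =
      #(splitPairs c σ) + 2 * #{κ | c (σ (κ, false)) = true ∧ c (σ (κ, true)) = true} := by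
  have key : ∀ x y : Bool, (if x = true then 1 else 0) + (if y = true then 1 else 0)
      = (if x ≠ y then 1 else 0) + 2 * (if x = true ∧ y = true then 1 else 0) := by decide
  simp only [splitPairs, card_filter, mul_sum, ← sum_add_distrib, ← key,
    ← Equiv.sum_comp σ (fun x => if c x = true then 1 else 0), Fintype.sum_prod_type,
    Fintype.sum_bool, add_comm]

theorem odd_card_filter_iff_odd_card_splitPairs {ι α : Type*} [Fintype ι] [Fintype α]
    (c : α → Bool) (σ : ι × Bool ≃ α) :
    Odd #{x | c x = true} ↔ Odd #(splitPairs c σ) := by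
  rw [card_filter_eq_card_splitPairs_add c σ]
  simp [Nat.odd_add, parity_simps]

def extendPairing {n k : ℕ} (σ : Fin n × Bool ≃ Fin k) : Fin (n + 1) × Bool ≃ Fin (k + 2) :=
  (finSumFinEquiv.symm.prodCongr (Equiv.refl Bool)).trans <| (Equiv.sumProdDistrib _ _ _).trans <|
    (σ.sumCongr ((Equiv.uniqueProd Bool (Fin 1)).trans finTwoEquiv.symm)).trans finSumFinEquiv

@[simp] theorem extendPairing_castSucc {n k : ℕ} (σ : Fin n × Bool ≃ Fin k) (κ : Fin n)
    (b : Bool) : extendPairing σ (κ.castSucc, b) = Fin.castAdd 2 (σ (κ, b)) := by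
  simp [extendPairing]

@[simp] theorem extendPairing_last {n k : ℕ} (σ : Fin n × Bool ≃ Fin k) (b : Bool) :
    extendPairing σ (Fin.last n, b) = Fin.natAdd k (bif b then 1 else 0) := by
  simp [extendPairing]
  rfl

theorem odd_extendPairing {n k : ℕ} {σ : Fin n × Bool ≃ Fin k}
    (hσ : ∀ κ, Odd ((σ (κ, false) : ℕ) + σ (κ, true))) (κ : Fin (n + 1)) :
    Odd ((extendPairing σ (κ, false) : ℕ) + extendPairing σ (κ, true)) := by
  induction κ using Fin.lastCases with
  | last => simp
  | cast κ => simpa using hσ κ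

theorem card_filter_eq_card_filter_castAdd_add {k : ℕ} (c : Fin (k + 2) → Bool) :
    #{p | c p = true} = #{p | c (Fin.castAdd 2 p) = true} +
      ((if c (Fin.natAdd k 0) = true then 1 else 0) +
        if c (Fin.natAdd k 1) = true then 1 else 0) := by
  simp only [card_filter, Fin.sum_univ_add, Fin.sum_univ_two]

theorem card_splitPairs_extendPairing {n k : ℕ} (c : Fin (k + 2) → Bool)
    (σ : Fin n × Bool ≃ Fin k) :
    #(splitPairs c (extendPairing σ)) = #(splitPairs (c ∘ Fin.castAdd 2) σ) +
      if c (Fin.natAdd k 0) ≠ c (Fin.natAdd k 1) then 1 else 0 := by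
  simp [splitPairs, card_filter, Fin.sum_univ_castSucc]

theorem card_splitPairs_extendPairing_le_one {n k : ℕ} {c : Fin (k + 2) → Bool}
    {σ : Fin n × Bool ≃ Fin k} (hσ : #(splitPairs (c ∘ Fin.castAdd 2) σ) ≤ 1)
    (hc : c (Fin.natAdd k 0) ≠ c (Fin.natAdd k 1) → Odd #{p | c p = true}) :
    #(splitPairs c (extendPairing σ)) ≤ 1 := by
  rw [card_splitPairs_extendPairing]
  split_ifs with hsplit
  · have hodd := hc hsplit
    rw [card_filter_eq_card_filter_castAdd_add] at hodd
    have heven : ¬ Odd #(splitPairs (c ∘ Fin.castAdd 2) σ) := by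
      rw [← odd_card_filter_iff_odd_card_splitPairs]
      revert hodd hsplit
      cases c (Fin.natAdd k 0) <;> cases c (Fin.natAdd k 1) <;> simp [Nat.odd_add_one]
    rw [Nat.odd_iff] at heven
    omega
  · simpa using hσ

theorem odd_val_add_val_add_iff {k : ℕ} (hk : Even k) (x y r : Fin k) :
    Odd ((x + r : Fin k) + (y + r : Fin k) : ℕ) ↔ Odd (x + y : ℕ) := by
  have h : ∀ a, a % k % 2 = a % 2 := fun a => Nat.mod_mod_of_dvd a (even_iff_two_dvd.1 hk)
  rw [Nat.odd_iff, Nat.odd_iff, Fin.val_add, Fin.val_add, Nat.add_mod, h, h, ← Nat.add_mod]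
  omega

theorem exists_pairing_card_splitPairs_le_one {ι : Type*} (n : ℕ) (c : ι → Fin (2 * n) → Bool)
    (hcuts : ∀ i, cyclicCuts (c i) ≤ 2) (hnc : ∀ i j, NonCrossing (c i) (c j)) :
    ∃ σ : Fin n × Bool ≃ Fin (2 * n), (∀ κ, Odd ((σ (κ, false) : ℕ) + σ (κ, true))) ∧
      ∀ i, #(splitPairs (c i) σ) ≤ 1 := by
  induction n with
  | zero =>
    exact ⟨Equiv.equivOfIsEmpty _ (Fin 0), fun κ => Fin.elim0 κ, fun _ => by simp [splitPairs]⟩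
  | succ n ih =>
    have hk : Even (2 * n + 2) := ⟨n + 1, by ring⟩
    obtain ⟨m, hm⟩ := exists_forall_cut_at_odd hk (by omega) c hcuts hnc
    -- rotate `m` to the position `2 * n`, then delete the positions `2 * n` and `2 * n + 1`
    set r : Fin (2 * n + 2) := m - Fin.natAdd (2 * n) 0
    set c' : ι → Fin (2 * n + 2) → Bool := fun i p => c i (p + r)
    have hc'm : ∀ i, c' i (Fin.natAdd (2 * n) 0) ≠ c' i (Fin.natAdd (2 * n) 1) →
        Odd #{p | c' i p = true} := by
      have h0 : Fin.natAdd (2 * n) 0 + r = m := add_sub_cancel _ _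
      have h1 : Fin.natAdd (2 * n) 1 + r = finRotate _ m := by
        rw [← finRotate_natAdd_zero, finRotate_apply, finRotate_apply, add_right_comm, h0]
      intro i hi
      rw [card_equiv (Equiv.addRight r) (t := {p | c i p = true}) (by simp [c'])]
      exact hm i (by simpa only [c', h0, h1] using hi)
    obtain ⟨σ, hσpar, hσ⟩ := ih (fun i => c' i ∘ Fin.castAdd 2)
      (fun i => (cyclicCuts_comp_castAdd_two_le _).trans
        ((cyclicCuts_comp_addRight (c i) r).trans_le (hcuts i)))
      (fun i j => (hnc i j).comp fun p => Fin.castAdd 2 p + r)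
    refine ⟨(extendPairing σ).trans (Equiv.addRight r), fun κ => ?_,
      fun i => card_splitPairs_extendPairing_le_one (hσ i) (hc'm i)⟩
    simpa [odd_val_add_val_add_iff hk] using odd_extendPairing hσpar κ

namespace SimpleGraph

variable {V : Type*} {G : SimpleGraph V}

theorem Preconnected.reachable_or_reachable_deleteEdges (hG : G.Preconnected) (u v x : V) :
    (G.deleteEdges {s(u, v)}).Reachable u x ∨ (G.deleteEdges {s(u, v)}).Reachable v x := by
  set R := (G.deleteEdges {s(u, v)}).Reachable
  suffices ∀ {x w : V} (p : G.Walk x w), R u w ∨ R v w → R u x ∨ R v x from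
    this (hG x u).some (.inl .rfl)
  intro x w p
  induction p with
  | nil => exact id
  | @cons x y _ hxy _ ih =>
    intro hw
    by_cases he : s(x, y) = s(u, v)
    · rcases Sym2.eq_iff.1 he with ⟨rfl, -⟩ | ⟨rfl, -⟩
      exacts [.inl .rfl, .inr .rfl]
    · have hyx : (G.deleteEdges {s(u, v)}).Adj y x := by simp [hxy.symm, Sym2.eq_swap, he]
      exact (ih hw).imp (·.trans hyx.reachable) (·.trans hyx.reachable)

theorem Preconnected.reachable_deleteEdges_iff (hG : G.Preconnected) (e : Sym2 V) (v₀ x y : V) :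
    (G.deleteEdges {e}).Reachable x y ↔
      ((G.deleteEdges {e}).Reachable v₀ x ↔ (G.deleteEdges {e}).Reachable v₀ y) := by
  set R := (G.deleteEdges {e}).Reachable
  obtain ⟨u, v, huv⟩ : ∃ u v, ∀ z, R u z ∨ R v z := by
    induction e using Sym2.ind with
    | _ u v => exact ⟨u, v, hG.reachable_or_reachable_deleteEdges u v⟩
  refine ⟨fun hxy => ⟨(·.trans hxy), (·.trans hxy.symm)⟩, fun hiff => ?_⟩
  by_cases hx : R v₀ x
  · exact hx.symm.trans (hiff.1 hx)
  have hy := hiff.not.1 hx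
  have hfar : ∀ w, R w v₀ → ∀ z, ¬ R v₀ z → ¬ R w z := fun w hw z hz hwz => hz (hw.symm.trans hwz)
  rcases huv v₀ with h | h
  · exact ((huv x).resolve_left (hfar u h x hx)).symm.trans ((huv y).resolve_left (hfar u h y hy))
  · exact ((huv x).resolve_right (hfar v h x hx)).symm.trans
      ((huv y).resolve_right (hfar v h y hy))

noncomputable def cutSide (G : SimpleGraph V) (v₀ : V) (e : Sym2 V) (x : V) : Bool :=
  decide ((G.deleteEdges {e}).Reachable v₀ x)

theorem Preconnected.cutSide_eq_cutSide_iff (hG : G.Preconnected) {v₀ : V} {e : Sym2 V}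
    {x y : V} : G.cutSide v₀ e x = G.cutSide v₀ e y ↔ (G.deleteEdges {e}).Reachable x y := by
  simp [cutSide, hG.reachable_deleteEdges_iff e v₀ x y]

theorem Preconnected.edgeOnPath_iff_cutSide_ne (hG : G.Preconnected) (v₀ : V) {e : Sym2 V}
    {x y : V} : EdgeOnPath G e x y ↔ G.cutSide v₀ e x ≠ G.cutSide v₀ e y :=
  hG.cutSide_eq_cutSide_iff.not.symm

theorem Preconnected.cutSide_of_notMem_edgeSet (hG : G.Preconnected) {e : Sym2 V}
    (he : e ∉ G.edgeSet) (v₀ x : V) : G.cutSide v₀ e x = true := by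
  simpa [cutSide, deleteEdges_eq_self.2 (Set.disjoint_singleton_right.2 he)] using hG v₀ x

theorem IsTree.nonCrossing_cutSide (hT : G.IsTree) (v₀ : V) (e f : Sym2 V) :
    NonCrossing (G.cutSide v₀ e) (G.cutSide v₀ f) := by
  have hG := hT.1.preconnected
  by_cases he : e ∈ G.edgeSet
  swap
  · exact ⟨false, true, fun x hx => by simp [hG.cutSide_of_notMem_edgeSet he] at hx⟩
  induction e using Sym2.ind with | _ u₁ u₂ => ?_
  induction f using Sym2.ind with | _ w w' => ?_
  -- since `e` is a bridge, the component of `G - e` containing `u` avoids `w`, hence the edge `f`,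
  -- so it lies in one component of `G - f`
  obtain ⟨u, hu⟩ : ∃ u, ¬ (G.deleteEdges {s(u₁, u₂)}).Reachable u w := by
    by_contra! h
    exact isBridge_iff.1 (isAcyclic_iff_forall_isBridge.1 hT.2 he) ((h u₁).trans (h u₂).symm)
  refine ⟨G.cutSide v₀ s(u₁, u₂) u, G.cutSide v₀ s(w, w') u, fun x hx => ?_⟩
  obtain ⟨p⟩ := hG.cutSide_eq_cutSide_iff.1 hx
  have hp : s(w, w') ∉ p.edges := fun h =>
    hu (p.reverse.takeUntil w (p.reverse.fst_mem_support_of_mem_edges (by simpa using h))).reachable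
  exact hG.cutSide_eq_cutSide_iff.2 ((p.toDeleteEdge _ hp).reachable.mono
    (deleteEdges_mono (deleteEdges_le _)))

end SimpleGraph

theorem Finset.card_filter_orderIsoOfFin {α : Type*} [LinearOrder α] (s : Finset α) {k : ℕ}
    (h : #s = k) (P : α → Prop) [DecidablePred P] :
    #{p | P (s.orderIsoOfFin h p)} = #{x ∈ s | P x} := by
  refine card_bij (fun p _ => s.orderIsoOfFin h p) (fun p hp => ?_) (by simp) fun x hx => ?_
  · simp only [mem_filter] at hp ⊢
    exact ⟨(s.orderIsoOfFin h p).2, hp.2⟩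
  · simp only [mem_filter] at hx
    refine ⟨(s.orderIsoOfFin h).symm ⟨x, hx.1⟩, ?_, by simp⟩
    rw [mem_filter]
    simpa using hx.2

theorem oddEdge_iff_odd_card_cutSide {N : ℕ} {T : SimpleGraph (Fin N)} (hT : T.Preconnected)
    {X : Finset (Fin N)} (hX : Even #X) (v₀ : Fin N) (e : Sym2 (Fin N)) :
    OddEdge T X e ↔ Odd #{x ∈ X | T.cutSide v₀ e x = true} := by
  have hside : ∀ u, Odd {x | x ∈ X ∧ (T.deleteEdges {e}).Reachable u x}.ncard ↔
      Odd #{x ∈ X | T.cutSide v₀ e x = true} := fun u => by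
    rw [← odd_card_filter_eq_iff hX _ (T.cutSide v₀ e u), ← Set.ncard_coe_finset]
    simp [hT.cutSide_eq_cutSide_iff, SimpleGraph.reachable_comm]
  by_cases he : e ∈ T.edgeSet
  · induction e using Sym2.ind with
    | _ u v => simp [OddEdge, he, hside]
  · simp [OddEdge, he, hT.cutSide_of_notMem_edgeSet he, ← Nat.not_even_iff_odd, hX]

theorem NicelyOrdered.cyclicCuts_cutSide_le_two {N : ℕ} {T : SimpleGraph (Fin N)}
    {X : Finset (Fin N)} (hX : NicelyOrdered T X) (hT : T.Preconnected) {k : ℕ} (h : #X = k)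
    (v₀ : Fin N) (e : Sym2 (Fin N)) :
    cyclicCuts (fun p => T.cutSide v₀ e (X.orderIsoOfFin h p)) ≤ 2 := by
  subst h
  by_cases he : e ∈ T.edgeSet
  · convert hX e he
    rw [cyclicCuts, ← Set.ncard_coe_finset]
    simp [hT.edgeOnPath_iff_cutSide_ne v₀]
  · simp [cyclicCuts, hT.cutSide_of_notMem_edgeSet he]

/-- **Pairing lemma**: if `X = {i₁ < ⋯ < i_{2n}}` (`n ≥ 1`) is nicely ordered,
then the `2n` indices can be partitioned into `n` pairs `(p_k, q_k)` of
opposite parity such that the paths `P_{i_{p_k} i_{q_k}}` are pairwise disjoint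
and their union is exactly the set `O_X` of odd edges. -/
theorem pairing_of_nicelyOrdered (N n : ℕ) (hn : 1 ≤ n)
    (T : SimpleGraph (Fin N)) (hT : T.IsTree)
    (X : Finset (Fin N)) (hcard : X.card = 2 * n) (hX : NicelyOrdered T X) :
    ∃ σ : Fin n × Bool ≃ Fin (2 * n),
      (∀ k : Fin n, Odd ((σ (k, false) : ℕ) + (σ (k, true) : ℕ))) ∧
      (∀ k k' : Fin n, k ≠ k' →
        Disjoint
          {e | EdgeOnPath T e (X.orderIsoOfFin hcard (σ (k, false)))
              (X.orderIsoOfFin hcard (σ (k, true)))}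
          {e | EdgeOnPath T e (X.orderIsoOfFin hcard (σ (k', false)))
              (X.orderIsoOfFin hcard (σ (k', true)))}) ∧
      (⋃ k : Fin n,
          {e | EdgeOnPath T e (X.orderIsoOfFin hcard (σ (k, false)))
              (X.orderIsoOfFin hcard (σ (k, true)))}) =
        {e | OddEdge T X e} := by
  have hT' := hT.1.preconnected
  obtain ⟨v₀, -⟩ : X.Nonempty := card_pos.1 (by omega)
  let c (e : Sym2 (Fin N)) (p : Fin (2 * n)) : Bool := T.cutSide v₀ e (X.orderIsoOfFin hcard p)
  obtain ⟨σ, hσpar, hσ⟩ := exists_pairing_card_splitPairs_le_one n c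
    (hX.cyclicCuts_cutSide_le_two hT' hcard v₀) (fun e f => (hT.nonCrossing_cutSide v₀ e f).comp _)
  have hsplit : ∀ e κ, EdgeOnPath T e (X.orderIsoOfFin hcard (σ (κ, false)))
      (X.orderIsoOfFin hcard (σ (κ, true))) ↔ κ ∈ splitPairs (c e) σ := fun e κ => by
    rw [splitPairs, mem_filter, hT'.edgeOnPath_iff_cutSide_ne v₀]
    simp [c]
  refine ⟨σ, hσpar, fun κ κ' hne => Set.disjoint_left.2 fun e h h' => hne ?_, ?_⟩
  · exact card_le_one.1 (hσ e) κ ((hsplit e κ).1 h) κ' ((hsplit e κ').1 h')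
  · ext e
    rw [Set.mem_iUnion, Set.mem_ofPred_eq,
      oddEdge_iff_odd_card_cutSide hT' (hcard ▸ even_two_mul n) v₀,
      ← X.card_filter_orderIsoOfFin hcard, odd_card_filter_iff_odd_card_splitPairs (c e) σ]
    simp only [Set.mem_ofPred_eq, hsplit]
    have := hσ e
    rw [Nat.odd_iff]
    exact ⟨fun h => by have := card_pos.2 h; omega, fun h => card_pos.1 (by omega)⟩
end
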